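/- arXiv:2412.19147 — 6 statements merged into one kernel-verified Lean document; each statement's English description precedes it below -/
import Mathlib

section
/- Let r ≥ 1 and let γ : ℝ → ℝ^{r+1} be a smooth 2π-periodic map admitting a 2π-periodic smooth unit tangent vector field e : ℝ → ℝ^{r+1} (i.e. ‖e(t)‖ = 1 and γ'(t) = ⟨γ'(t), e(t)⟩ e(t) for all t). Assume every singular point of γ is non-degenerate, i.e. γ''(c) ≠ 0 whenever γ'(c) = 0. Then (1/π) ∫₀^{2π} ‖e'(t)‖ dt + #{t ∈ [0, 2π) : γ'(t) = 0} ≥ 2, where the second summand is the (finite) number of singular points in one period. -/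
open scoped RealInnerProductSpace
open Real Set Filter


lemma my_arccos_le_arccos {x y : ℝ} (h : x ≤ y) : Real.arccos y ≤ Real.arccos x := by
  simp only [Real.arccos_eq_pi_div_two_sub_arcsin]
  linarith [Real.monotone_arcsin h]

lemma my_sphere_triangle {E : Type*} [NormedAddCommGroup E] [InnerProductSpace ℝ E]
    {x y z : E} (hx : ‖x‖ = 1) (hy : ‖y‖ = 1) (hz : ‖z‖ = 1) :
    Real.arccos ⟪x, z⟫ ≤ Real.arccos ⟪x, y⟫ + Real.arccos ⟪y, z⟫ := by
  obtain ⟨a, ha'⟩ : ∃ a : ℝ, a = ⟪x, y⟫ := ⟨_, rfl⟩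
  obtain ⟨b, hb'⟩ : ∃ b : ℝ, b = ⟪y, z⟫ := ⟨_, rfl⟩
  rw [← ha', ← hb']
  have ha : |a| ≤ 1 := by rw [ha']; simpa [hx, hy] using abs_real_inner_le_norm x y
  have hb : |b| ≤ 1 := by rw [hb']; simpa [hy, hz] using abs_real_inner_le_norm y z
  obtain ⟨ha1, ha2⟩ := abs_le.mp ha
  obtain ⟨hb1, hb2⟩ := abs_le.mp hb
  have key : Real.cos (Real.arccos a + Real.arccos b) ≤ ⟪x, z⟫ := by
    rw [Real.cos_add, Real.cos_arccos ha1 ha2, Real.cos_arccos hb1 hb2,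
      Real.sin_arccos, Real.sin_arccos]
    have hinner : ⟪x - a • y, z - b • y⟫ = ⟪x, z⟫ - a * b := by
      rw [inner_sub_left, inner_sub_right, inner_sub_right, real_inner_smul_left,
        real_inner_smul_left, real_inner_smul_right, real_inner_smul_right,
        real_inner_self_eq_norm_sq, hy, ← ha', ← hb']
      ring
    have hnu : ‖x - a • y‖ ^ 2 = 1 - a ^ 2 := by
      rw [norm_sub_sq_real, real_inner_smul_right, norm_smul, hx, hy, ← ha',
        Real.norm_eq_abs]
      rw [show (|a| * 1) ^ 2 = a ^ 2 by rw [mul_one, sq_abs]]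
      ring
    have hnw : ‖z - b • y‖ ^ 2 = 1 - b ^ 2 := by
      rw [norm_sub_sq_real, real_inner_smul_right, norm_smul, hz, hy,
        real_inner_comm y z, ← hb', Real.norm_eq_abs]
      rw [show (|b| * 1) ^ 2 = b ^ 2 by rw [mul_one, sq_abs]]
      ring
    have hCS : -(‖x - a • y‖ * ‖z - b • y‖) ≤ ⟪x - a • y, z - b • y⟫ :=
      neg_le_of_abs_le (abs_real_inner_le_norm _ _)
    have h1 : ‖x - a • y‖ = Real.sqrt (1 - a ^ 2) := by
      rw [← hnu]; exact (Real.sqrt_sq (norm_nonneg _)).symm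
    have h2 : ‖z - b • y‖ = Real.sqrt (1 - b ^ 2) := by
      rw [← hnw]; exact (Real.sqrt_sq (norm_nonneg _)).symm
    rw [h1, h2, hinner] at hCS
    linarith
  by_cases hle : Real.arccos a + Real.arccos b ≤ Real.pi
  · have h := my_arccos_le_arccos key
    rwa [Real.arccos_cos (add_nonneg (Real.arccos_nonneg a) (Real.arccos_nonneg b)) hle] at h
  · exact le_trans (Real.arccos_le_pi _) (by linarith)

lemma my_arcsin_le {u : ℝ} (h0 : 0 ≤ u) (h1 : u ≤ 1/2) : Real.arcsin u ≤ u + u ^ 3 := by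
  rcases eq_or_lt_of_le h0 with h | h
  · simp [← h]
  · have hx : (0:ℝ) < u + u ^ 3 := by positivity
    have hu2 : u ^ 2 ≤ 1/4 := by nlinarith
    have hx1 : u + u ^ 3 ≤ 1 := by nlinarith
    have hs : u ≤ Real.sin (u + u ^ 3) := by
      have hsin := Real.sin_gt_sub_cube hx
      have hexp : (u + u ^ 3) ^ 3 = u ^ 3 * (1 + u ^ 2) ^ 3 := by ring
      have h125 : (1 + u ^ 2) ^ 3 ≤ 2 := by nlinarith [sq_nonneg (u^2), pow_pos h 3]
      have hle : (u + u ^ 3) ^ 3 ≤ 2 * u ^ 3 := by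
        rw [hexp]; nlinarith [pow_pos h 3]
      nlinarith [pow_pos h 3]
    have h2 : Real.arcsin u ≤ Real.arcsin (Real.sin (u + u ^ 3)) := Real.monotone_arcsin hs
    rwa [Real.arcsin_sin (by linarith [Real.pi_pos]) (by nlinarith [Real.pi_gt_three])] at h2

lemma my_arccos_chord {E : Type*} [NormedAddCommGroup E] [InnerProductSpace ℝ E]
    {x y : E} (hx : ‖x‖ = 1) (hy : ‖y‖ = 1) :
    Real.arccos ⟪x, y⟫ = 2 * Real.arcsin (‖x - y‖ / 2) := by
  set u := ‖x - y‖ / 2 with hu'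
  have hu0 : 0 ≤ u := by positivity
  have hu1 : u ≤ 1 := by
    have : ‖x - y‖ ≤ 2 := by
      calc ‖x - y‖ ≤ ‖x‖ + ‖y‖ := norm_sub_le x y
      _ = 2 := by rw [hx, hy]; norm_num
    simp only [hu']; linarith
  have hxy : ⟪x, y⟫ = 1 - 2 * u ^ 2 := by
    have h2 : ‖x - y‖ ^ 2 = 2 - 2 * ⟪x, y⟫ := by
      rw [norm_sub_sq_real, hx, hy]; ring
    have : ‖x - y‖ = 2 * u := by rw [hu']; ring
    rw [this] at h2; nlinarith
  have hcos : Real.cos (2 * Real.arcsin u) = 1 - 2 * u ^ 2 := by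
    rw [Real.cos_two_mul, ← Real.sin_sq_add_cos_sq (Real.arcsin u),
      Real.sin_arcsin (by linarith) hu1]
    ring
  rw [hxy, ← hcos, Real.arccos_cos]
  · exact mul_nonneg (by norm_num) (Real.arcsin_nonneg.mpr hu0)
  · linarith [Real.arcsin_le_pi_div_two u]

lemma my_arc_ge {E : Type*} [NormedAddCommGroup E] [InnerProductSpace ℝ E] [CompleteSpace E]
    {e : ℝ → E} (he : ContDiff ℝ (⊤ : ℕ∞) e) (heunit : ∀ t, ‖e t‖ = 1) {a b : ℝ} (hab : a ≤ b) :
    Real.arccos ⟪e a, e b⟫ ≤ ∫ t in a..b, ‖deriv e t‖ := by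
  have hed : Differentiable ℝ e := he.differentiable (by simp)
  have hec : Continuous (deriv e) := he.continuous_deriv (by simp)
  set g : ℝ → ℝ := fun t => ‖deriv e t‖ with hg'
  have hgc : Continuous g := hec.norm
  have hgnn : ∀ t, 0 ≤ g t := fun t => norm_nonneg _
  set s : ℝ → ℝ := fun t => ∫ τ in a..t, g τ with hs'
  have hscont : Continuous s :=
    intervalIntegral.continuous_primitive (fun u v => hgc.intervalIntegrable u v) a
  have chord : ∀ u v : ℝ, ‖e v - e u‖ ≤ |s v - s u| := by
    intro u v
    have h1 : e v - e u = ∫ τ in u..v, deriv e τ :=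
      (intervalIntegral.integral_deriv_eq_sub (fun x _ => hed x)
        (hec.intervalIntegrable u v)).symm
    have h2 : s v - s u = ∫ τ in u..v, g τ :=
      intervalIntegral.integral_interval_sub_left (hgc.intervalIntegrable a v)
        (hgc.intervalIntegrable a u)
    rw [h1, h2]
    exact intervalIntegral.norm_integral_le_abs_integral_norm
  set ℓ := s b with hℓ'
  have hs_a : s a = 0 := intervalIntegral.integral_same
  have hℓ0 : 0 ≤ ℓ := intervalIntegral.integral_nonneg hab (fun t _ => hgnn t)
  have he_eq : ∀ u v : ℝ, s u = s v → e u = e v := by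
    intro u v h
    have h1 := chord u v
    rw [h, sub_self, abs_zero] at h1
    have h2 : e v - e u = 0 := norm_le_zero_iff.mp h1
    exact (sub_eq_zero.mp h2).symm
  have main : ∀ n : ℕ, 0 < n → ℓ ≤ n →
      Real.arccos ⟪e a, e b⟫ ≤ ℓ + ℓ ^ 3 / (4 * (n:ℝ) ^ 2) := by
    intro n hn hℓn
    have hn' : (0:ℝ) < n := by exact_mod_cast hn
    have hpick : ∀ i : ℕ, ∃ x, x ∈ Icc a b ∧ s x = (min i n : ℕ) * ℓ / n := by
      intro i
      have hc1 : (0:ℝ) ≤ (min i n : ℕ) * ℓ / n := by positivity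
      have hc2 : ((min i n : ℕ):ℝ) * ℓ / n ≤ ℓ := by
        rw [div_le_iff₀ hn']
        have : ((min i n : ℕ):ℝ) ≤ (n:ℝ) := by exact_mod_cast min_le_right i n
        nlinarith
      have hmem : ((min i n : ℕ):ℝ) * ℓ / n ∈ Icc (s a) (s b) := by
        rw [hs_a]; exact ⟨hc1, hc2⟩
      obtain ⟨x, hx1, hx2⟩ := intermediate_value_Icc hab hscont.continuousOn hmem
      exact ⟨x, hx1, hx2⟩
    choose t ht hst using hpick
    have h0 : e (t 0) = e a := he_eq _ _ (by rw [hst 0, hs_a]; simp)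
    have hN : e (t n) = e b := he_eq _ _ (by
      rw [hst n, min_self]
      field_simp; exact hℓ')
    have chain : ∀ m : ℕ, Real.arccos ⟪e (t 0), e (t m)⟫ ≤
        ∑ i ∈ Finset.range m, Real.arccos ⟪e (t i), e (t (i+1))⟫ := by
      intro m
      induction m with
      | zero => simp [real_inner_self_eq_norm_sq, heunit, Real.arccos_one]
      | succ m ih =>
        calc Real.arccos ⟪e (t 0), e (t (m+1))⟫
            ≤ Real.arccos ⟪e (t 0), e (t m)⟫ + Real.arccos ⟪e (t m), e (t (m+1))⟫ :=
              my_sphere_triangle (heunit _) (heunit _) (heunit _)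
          _ ≤ _ := by rw [Finset.sum_range_succ]; linarith
    have hterm : ∀ i, i < n → Real.arccos ⟪e (t i), e (t (i+1))⟫ ≤
        ℓ / n + ℓ ^ 3 / (4 * (n:ℝ) ^ 3) := by
      intro i hi
      have hc : ‖e (t i) - e (t (i+1))‖ ≤ ℓ / n := by
        have h1 := chord (t (i+1)) (t i)
        rw [hst, hst, min_eq_left (Nat.succ_le_of_lt hi), min_eq_left hi.le] at h1
        have : |(i:ℝ) * ℓ / n - ((i+1:ℕ):ℝ) * ℓ / n| = ℓ / n := by
          push_cast
          rw [abs_of_nonpos (by rw [sub_nonpos]; gcongr; linarith)]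
          field_simp
          ring
        rw [this] at h1
        exact h1
      have hu0 : (0:ℝ) ≤ ℓ / (2*n) := by positivity
      have hu1 : ℓ / (2*n) ≤ 1/2 := by rw [div_le_iff₀ (by positivity)]; nlinarith
      calc Real.arccos ⟪e (t i), e (t (i+1))⟫
          = 2 * Real.arcsin (‖e (t i) - e (t (i+1))‖ / 2) := my_arccos_chord (heunit _) (heunit _)
        _ ≤ 2 * Real.arcsin (ℓ / (2*n)) := by
            have : ‖e (t i) - e (t (i+1))‖ / 2 ≤ ℓ / (2*n) := by
              have hc' : ‖e (t i) - e (t (i+1))‖ * n ≤ ℓ := (le_div_iff₀ hn').mp hc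
              rw [div_le_div_iff₀ (by norm_num) (by positivity)]
              nlinarith
            linarith [Real.monotone_arcsin this]
        _ ≤ 2 * (ℓ/(2*n) + (ℓ/(2*n)) ^ 3) := by linarith [my_arcsin_le hu0 hu1]
        _ = ℓ / n + ℓ ^ 3 / (4 * (n:ℝ) ^ 3) := by field_simp; ring
    have hsum : Real.arccos ⟪e a, e b⟫ ≤ (n:ℝ) * (ℓ / n + ℓ ^ 3 / (4 * (n:ℝ) ^ 3)) := by
      rw [← h0, ← hN]
      refine (chain n).trans ?_
      have := Finset.sum_le_sum (fun i hi => hterm i (Finset.mem_range.mp hi))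
      calc ∑ i ∈ Finset.range n, Real.arccos ⟪e (t i), e (t (i+1))⟫
          ≤ ∑ _i ∈ Finset.range n, (ℓ / n + ℓ ^ 3 / (4 * (n:ℝ) ^ 3)) := this
        _ = (n:ℝ) * (ℓ / n + ℓ ^ 3 / (4 * (n:ℝ) ^ 3)) := by
            rw [Finset.sum_const, Finset.card_range, nsmul_eq_mul]
    have heq : (n:ℝ) * (ℓ / n + ℓ ^ 3 / (4 * (n:ℝ) ^ 3)) = ℓ + ℓ ^ 3 / (4 * (n:ℝ) ^ 2) := by
      field_simp
    rw [heq] at hsum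
    exact hsum
  show Real.arccos ⟪e a, e b⟫ ≤ ℓ
  refine le_of_forall_pos_le_add fun ε hε => ?_
  obtain ⟨n, hn⟩ := exists_nat_gt (max 1 (max ℓ (ℓ ^ 3 / (4 * ε))))
  have h1 : (1:ℝ) < n := lt_of_le_of_lt (le_max_left _ _) hn
  have hn0 : 0 < n := by exact_mod_cast lt_trans zero_lt_one h1
  have hℓn : ℓ ≤ n := le_of_lt (lt_of_le_of_lt (le_trans (le_max_left _ _) (le_max_right _ _)) hn)
  have h2 := main n hn0 hℓn
  have h3 : ℓ ^ 3 / (4 * (n:ℝ) ^ 2) ≤ ε := by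
    have hx : ℓ ^ 3 / (4 * ε) < n := lt_of_le_of_lt (le_trans (le_max_right _ _) (le_max_right _ _)) hn
    have hn2 : (n:ℝ) ≤ (n:ℝ)^2 := by nlinarith
    rw [div_le_iff₀ (by positivity)]
    rw [div_lt_iff₀ (by positivity)] at hx
    nlinarith
  linarith

lemma my_fenchel {E : Type*} [NormedAddCommGroup E] [InnerProductSpace ℝ E] [CompleteSpace E]
    {e : ℝ → E} (he : ContDiff ℝ (⊤ : ℕ∞) e) (heunit : ∀ t, ‖e t‖ = 1)
    (hper : e (2 * π) = e 0)
    (H : ∀ v : E, v ≠ 0 → ∃ t ∈ Icc (0:ℝ) (2 * π), ⟪e t, v⟫ ≤ 0) :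
    2 * π ≤ ∫ t in (0:ℝ)..(2 * π), ‖deriv e t‖ := by
  by_contra hcon
  push_neg at hcon
  have hT : (0:ℝ) < 2 * π := by positivity
  have hec : Continuous (deriv e) := he.continuous_deriv (by simp)
  set g : ℝ → ℝ := fun t => ‖deriv e t‖ with hg'
  have hgc : Continuous g := hec.norm
  set s : ℝ → ℝ := fun t => ∫ τ in (0:ℝ)..t, g τ with hs'
  have hscont : Continuous s :=
    intervalIntegral.continuous_primitive (fun u v => hgc.intervalIntegrable u v) 0
  set L := s (2 * π) with hL'
  have hL0 : 0 ≤ L := intervalIntegral.integral_nonneg hT.le (fun t _ => norm_nonneg _)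
  have hLlt : L < 2 * π := hcon
  have hsub : ∀ u v : ℝ, u ≤ v → Real.arccos ⟪e u, e v⟫ ≤ s v - s u := by
    intro u v huv
    have h2 : s v - s u = ∫ τ in u..v, g τ :=
      intervalIntegral.integral_interval_sub_left (hgc.intervalIntegrable 0 v)
        (hgc.intervalIntegrable 0 u)
    rw [h2]
    exact my_arc_ge he heunit huv
  have hs0 : s 0 = 0 := intervalIntegral.integral_same
  -- midpoint in arclength
  obtain ⟨t₁, ht₁, hst₁⟩ : ∃ t₁ ∈ Icc (0:ℝ) (2*π), s t₁ = L / 2 := by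
    have hmem : L / 2 ∈ Icc (s 0) (s (2*π)) := by rw [hs0, ← hL']; constructor <;> linarith
    obtain ⟨x, hx1, hx2⟩ := intermediate_value_Icc hT.le hscont.continuousOn hmem
    exact ⟨x, hx1, hx2⟩
  set p := e 0 with hp'
  set q := e t₁ with hq'
  have hd1 : Real.arccos ⟪p, q⟫ ≤ L / 2 := by
    have := hsub 0 t₁ ht₁.1
    rwa [hs0, hst₁, sub_zero] at this
  by_cases hpq : p + q = 0
  · have hq : q = -p := by linear_combination (norm := abel) hpq
    have : ⟪p, q⟫ = -1 := by
      rw [hq, inner_neg_right, real_inner_self_eq_norm_sq, heunit]; norm_num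
    rw [this, Real.arccos_neg_one] at hd1
    linarith
  · set m : E := ‖p + q‖⁻¹ • (p + q) with hm'
    have hpqn : (0:ℝ) < ‖p + q‖ := norm_pos_iff.mpr hpq
    have hm1 : ‖m‖ = 1 := by
      rw [hm', norm_smul, norm_inv, norm_norm, inv_mul_cancel₀ hpqn.ne']
    have hinner_pq : ⟪p, q⟫ > -1 := by
      have h2 : ‖p + q‖ ^ 2 = 2 + 2 * ⟪p, q⟫ := by
        rw [norm_add_sq_real, heunit, heunit]; ring
      nlinarith
    have hpm : 0 < ⟪p, m⟫ := by
      rw [hm', real_inner_smul_right, inner_add_right, real_inner_self_eq_norm_sq, heunit]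
      have h1 : (0:ℝ) < 1 ^ 2 + ⟪p, q⟫ := by nlinarith
      exact mul_pos (inv_pos.mpr hpqn) h1
    -- claim : no zero of ⟪e t, m⟫ on [0, 2π]
    have claim : ∀ t ∈ Icc (0:ℝ) (2*π), ⟪e t, m⟫ ≠ 0 := by
      intro t ht h0
      set x := e t with hx'
      have hxpq : arccos ⟪x, p⟫ + arccos ⟪x, q⟫ ≤ L / 2 := by
        rcases le_total t t₁ with h | h
        · have h1 : arccos ⟪x, p⟫ ≤ s t := by
            have := hsub 0 t ht.1
            rw [hs0, sub_zero, real_inner_comm] at this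
            exact this
          have h2 : arccos ⟪x, q⟫ ≤ L/2 - s t := by
            have := hsub t t₁ h
            rwa [hst₁] at this
          linarith
        · have h1 : arccos ⟪x, q⟫ ≤ s t - L/2 := by
            have := hsub t₁ t h
            rw [hst₁, real_inner_comm] at this
            exact this
          have h2 : arccos ⟪x, p⟫ ≤ L - s t := by
            have := hsub t (2*π) ht.2
            rwa [← hL', hper] at this
          linarith
      have hxm : ⟪p, -x⟫ = ⟪q, x⟫ := by
        have h1 : ⟪p + q, x⟫ = 0 := by
          have : ⟪x, p + q⟫ = ‖p + q‖ * ⟪x, m⟫ := by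
            rw [hm', real_inner_smul_right]
            field_simp
          rw [real_inner_comm, this, h0, mul_zero]
        rw [inner_add_left] at h1
        rw [inner_neg_right]
        linarith
      have htri : Real.arccos ⟪x, -x⟫ ≤ Real.arccos ⟪x, p⟫ + Real.arccos ⟪p, -x⟫ :=
        my_sphere_triangle (heunit t) (heunit 0) (by rw [norm_neg]; exact heunit t)
      rw [hxm, real_inner_comm x q] at htri
      have hxx : ⟪x, -x⟫ = -1 := by
        rw [inner_neg_right, real_inner_self_eq_norm_sq, heunit]; norm_num
      rw [hxx, Real.arccos_neg_one] at htri
      linarith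
    -- m is nonzero, use H
    obtain ⟨t', ht', hhm⟩ := H m (by intro h; rw [h, norm_zero] at hm1; norm_num at hm1)
    have hcont : Continuous fun t => ⟪e t, m⟫ :=
      (he.continuous).inner continuous_const
    rcases eq_or_lt_of_le hhm with heq | hlt
    · exact claim t' ht' heq
    · have hmem : (0:ℝ) ∈ Icc ⟪e t', m⟫ ⟪e 0, m⟫ := ⟨hlt.le, hpm.le⟩
      obtain ⟨z, hz1, hz2⟩ := intermediate_value_Icc' ht'.1 hcont.continuousOn hmem
      exact claim z ⟨hz1.1, le_trans hz1.2 ht'.2⟩ hz2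

lemma my_no_single_zero {α : ℝ → ℝ} {T c d : ℝ} (hT : 0 < T) (hcont : Continuous α)
    (hper : Function.Periodic α T) (hc0 : α c = 0)
    (hzeros : ∀ t, α t = 0 → ∃ k : ℤ, t - c = (k:ℝ) * T)
    (hslope : Filter.Tendsto (slope α c) (nhdsWithin c {c}ᶜ) (nhds d)) (hd : 0 < d) :
    False := by
  have h2 : ∀ᶠ t in nhdsWithin c {c}ᶜ, 0 < slope α c t := hslope.eventually (eventually_gt_nhds hd)
  rw [eventually_nhdsWithin_iff] at h2
  obtain ⟨δ, hδ0, hδ⟩ := Metric.eventually_nhds_iff.mp h2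
  set δ₀ := min (δ/2) (T/4) with hδ₀'
  have hδ₀0 : 0 < δ₀ := lt_min (by linarith) (by linarith)
  have hδ₀δ : δ₀ < δ := lt_of_le_of_lt (min_le_left _ _) (by linarith)
  have hδ₀T : δ₀ ≤ T/4 := min_le_right _ _
  have hsl : ∀ t, dist t c < δ → t ≠ c → 0 < slope α c t := by
    intro t h1 h2'
    exact hδ h1 (mem_compl_singleton_iff.mpr h2')
  have hu : 0 < α (c + δ₀) := by
    have h := hsl (c + δ₀) (by rw [Real.dist_eq, add_sub_cancel_left, abs_of_pos hδ₀0]; linarith)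
      (by intro h; nlinarith [congrArg (fun x => x - c) h])
    rw [slope_def_field, hc0, sub_zero, add_sub_cancel_left] at h
    rcases div_pos_iff.mp h with ⟨h1, _⟩ | ⟨_, h2'⟩
    · exact h1
    · linarith
  have hw : α (c + T - δ₀) < 0 := by
    have hper' : α (c + T - δ₀) = α (c - δ₀) := by
      have h := hper (c - δ₀)
      rw [show c - δ₀ + T = c + T - δ₀ by ring] at h
      exact h
    rw [hper']
    have h := hsl (c - δ₀) (by rw [Real.dist_eq, sub_sub_cancel_left, abs_neg, abs_of_pos hδ₀0]; linarith)
      (by intro h; nlinarith [congrArg (fun x => c - x) h])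
    rw [slope_def_field, hc0, sub_zero] at h
    have hden : c - δ₀ - c < 0 := by linarith
    rcases div_pos_iff.mp h with ⟨_, h2'⟩ | ⟨h1, _⟩
    · linarith
    · exact h1
  have hle : c + δ₀ ≤ c + T - δ₀ := by linarith
  have h0mem : (0:ℝ) ∈ uIcc (α (c + δ₀)) (α (c + T - δ₀)) := by
    rw [mem_uIcc]; right; exact ⟨hw.le, hu.le⟩
  obtain ⟨z, hz1, hz2⟩ := intermediate_value_uIcc hcont.continuousOn h0mem
  rw [uIcc_of_le hle] at hz1
  obtain ⟨k, hk⟩ := hzeros z hz2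
  have h1 : δ₀ ≤ (k:ℝ) * T := by
    have := hz1.1; linarith [hk ▸ (by linarith [hz1.1] : δ₀ ≤ z - c)]
  have h2' : (k:ℝ) * T ≤ T - δ₀ := by
    have := hz1.2; linarith [hk ▸ (by linarith [hz1.2] : z - c ≤ T - δ₀)]
  have hk1 : 1 ≤ k := by
    by_contra h
    push_neg at h
    have hk0 : k ≤ 0 := by omega
    have : (k:ℝ) ≤ 0 := by exact_mod_cast hk0
    nlinarith
  have : (1:ℝ) ≤ (k:ℝ) := by exact_mod_cast hk1
  nlinarith

/-- Fenchel-type inequality for closed co-orientable frontal curves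
(Corollary 4.3, inequality part). -/
theorem total_absolute_curvature_ge_two
    (r : ℕ) (hr : 1 ≤ r)
    (γ e : ℝ → EuclideanSpace ℝ (Fin (r + 1)))
    (hγ : ContDiff ℝ (⊤ : ℕ∞) γ) (he : ContDiff ℝ (⊤ : ℕ∞) e)
    (hγper : ∀ t, γ (t + 2 * Real.pi) = γ t)
    (heper : ∀ t, e (t + 2 * Real.pi) = e t)
    (heunit : ∀ t, ‖e t‖ = 1)
    (htang : ∀ t, deriv γ t = ⟪deriv γ t, e t⟫ • e t)
    (hnd : ∀ c, deriv γ c = 0 → deriv (deriv γ) c ≠ 0) :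
    2 ≤ (1 / Real.pi) * (∫ t in (0 : ℝ)..(2 * Real.pi), ‖deriv e t‖)
        + (({t ∈ Set.Ico (0 : ℝ) (2 * Real.pi) | deriv γ t = 0}).ncard : ℝ) := by
  have hT : (0:ℝ) < 2 * π := by positivity
  set α : ℝ → ℝ := fun t => ⟪deriv γ t, e t⟫ with hα'
  have hγd : Differentiable ℝ γ := hγ.differentiable (by simp)
  have hdγc : ContDiff ℝ ((⊤:ℕ∞) : WithTop ℕ∞) (deriv γ) :=
    (contDiff_infty_iff_deriv.mp (hγ.of_le (by simp))).2
  have hαc : ContDiff ℝ ((⊤:ℕ∞) : WithTop ℕ∞) α := ContDiff.inner ℝ hdγc (he.of_le (by simp))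
  have hαcont : Continuous α := hαc.continuous
  have hαd : Differentiable ℝ α := hαc.differentiable (by simp)
  have hzero : ∀ t, deriv γ t = 0 ↔ α t = 0 := by
    intro t
    constructor
    · intro h
      show (⟪deriv γ t, e t⟫ : ℝ) = 0
      rw [h, inner_zero_left]
    · intro h
      have h' : (⟪deriv γ t, e t⟫ : ℝ) = 0 := h
      rw [htang t, h', zero_smul]
  have hγdper : ∀ t, deriv γ (t + 2 * π) = deriv γ t := by
    intro t
    have h1 : deriv (fun s => γ (s + 2 * π)) t = deriv γ (t + 2 * π) := deriv_comp_add_const _ _ _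
    rw [funext hγper] at h1
    exact h1.symm
  have hαper : Function.Periodic α (2 * π) := by
    intro t
    simp only [hα']
    rw [hγdper, heper]
  have hαd' : ∀ c, HasDerivAt α (deriv α c) c := fun c => (hαd c).hasDerivAt
  have hslope0 : ∀ c, α c = 0 → deriv α c ≠ 0 := by
    intro c hc hd0
    apply hnd c ((hzero c).mpr hc)
    have h1 : HasDerivAt (fun t => α t • e t) (α c • deriv e c + deriv α c • e c) c :=
      (hαd' c).smul ((he.differentiable (by simp) c).hasDerivAt)
    have h2 : (fun t : ℝ => α t • e t) = deriv γ := (funext htang).symm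
    rw [h2] at h1
    rw [h1.deriv, hc, hd0, zero_smul, zero_smul, add_zero]
  have hiso : ∀ c, α c = 0 → ∀ᶠ t in nhdsWithin c {c}ᶜ, α t ≠ 0 := by
    intro c hc
    have h1 := hasDerivAt_iff_tendsto_slope.mp (hαd' c)
    have h2 : {y : ℝ | y ≠ 0} ∈ nhds (deriv α c) := isOpen_ne.mem_nhds (hslope0 c hc)
    filter_upwards [h1.eventually_mem h2, self_mem_nhdsWithin] with t hts htc h0
    apply hts
    have htc' : t ≠ c := htc
    simp only [slope_def_field, hc, h0, sub_zero, zero_sub]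
    simp
  -- the compact zero set is finite
  set Z := {t : ℝ | t ∈ Icc (0:ℝ) (2*π) ∧ α t = 0} with hZ'
  have hZc : IsCompact Z := by
    have : Z = Icc (0:ℝ) (2*π) ∩ α ⁻¹' {0} := by
      ext t; simp [hZ']
    rw [this]
    exact isCompact_Icc.inter_right (isClosed_singleton.preimage hαcont)
  have hU : ∀ z ∈ Z, {t : ℝ | t ≠ z → α t ≠ 0} ∈ nhds z := by
    intro z hz
    have h := hiso z hz.2
    rw [eventually_nhdsWithin_iff] at h
    filter_upwards [h] with t ht htz
    exact ht (mem_compl_singleton_iff.mpr htz)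
  obtain ⟨F, hF1, hF2⟩ := hZc.elim_nhds_subcover (fun z => {t : ℝ | t ≠ z → α t ≠ 0}) hU
  have hZfin : Z.Finite := by
    apply Set.Finite.subset F.finite_toSet
    intro y hy
    have := hF2 hy
    simp only [mem_iUnion, exists_prop] at this
    obtain ⟨x, hxF, hyx⟩ := this
    by_cases h : y = x
    · rwa [h]
    · exact absurd hy.2 (hyx h)
  set S := {t ∈ Set.Ico (0:ℝ) (2 * π) | deriv γ t = 0} with hS'
  have hSZ : S ⊆ Z := fun t ht => ⟨⟨ht.1.1, ht.1.2.le⟩, (hzero t).mp ht.2⟩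
  have hSfin : S.Finite := hZfin.subset hSZ
  have hmod : ∀ t, α t = 0 → toIcoMod hT 0 t ∈ S ∧ t - toIcoMod hT 0 t = (toIcoDiv hT 0 t : ℝ) * (2*π) := by
    intro t h0
    have hk := self_sub_toIcoMod hT 0 t
    have hm : t - toIcoDiv hT 0 t • (2*π) = toIcoMod hT 0 t := by
      rw [← hk]; ring
    have hval : α (toIcoMod hT 0 t) = 0 := by
      rw [← hm, hαper.sub_zsmul_eq]
      exact h0
    refine ⟨⟨toIcoMod_mem_Ico' hT t, (hzero _).mpr hval⟩, ?_⟩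
    rw [hk, zsmul_eq_mul]
  have hI0 : 0 ≤ ∫ t in (0:ℝ)..(2*π), ‖deriv e t‖ :=
    intervalIntegral.integral_nonneg hT.le (fun t _ => norm_nonneg _)
  rcases eq_empty_or_nonempty S with hSe | hSne
  · -- no singular point : Fenchel
    have hαne : ∀ t, α t ≠ 0 := by
      intro t h0
      have := (hmod t h0).1
      rw [hSe] at this
      exact this
    have hsign : (∀ t, 0 < α t) ∨ (∀ t, α t < 0) := by
      rcases lt_or_gt_of_ne (hαne 0) with h | h
      · right
        intro t
        rcases lt_or_gt_of_ne (hαne t) with h' | h'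
        · exact h'
        · exfalso
          have h0m : (0:ℝ) ∈ uIcc (α 0) (α t) := by rw [mem_uIcc]; left; exact ⟨h.le, h'.le⟩
          obtain ⟨z, _, hz2⟩ := intermediate_value_uIcc hαcont.continuousOn h0m
          exact hαne z hz2
      · left
        intro t
        rcases lt_or_gt_of_ne (hαne t) with h' | h'
        · exfalso
          have h0m : (0:ℝ) ∈ uIcc (α 0) (α t) := by rw [mem_uIcc]; right; exact ⟨h'.le, h.le⟩
          obtain ⟨z, _, hz2⟩ := intermediate_value_uIcc hαcont.continuousOn h0m
          exact hαne z hz2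
        · exact h'
    have Hv : ∀ v : EuclideanSpace ℝ (Fin (r+1)), v ≠ 0 →
        ∃ t ∈ Icc (0:ℝ) (2*π), ⟪e t, v⟫ ≤ 0 := by
      intro v hv
      by_contra hcon
      push_neg at hcon
      have hint : IntervalIntegrable (fun t => ⟪deriv γ t, v⟫) MeasureTheory.volume 0 (2*π) :=
        (hdγc.continuous.inner continuous_const).intervalIntegrable 0 (2*π)
      have hFTC : ∫ t in (0:ℝ)..(2*π), ⟪deriv γ t, v⟫ = 0 := by
        have hd : ∀ t ∈ uIcc (0:ℝ) (2*π), HasDerivAt (fun u => ⟪γ u, v⟫) ⟪deriv γ t, v⟫ t := by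
          intro t _
          have := HasDerivAt.inner ℝ ((hγd t).hasDerivAt) (hasDerivAt_const t v)
          simpa using this
        rw [intervalIntegral.integral_eq_sub_of_hasDerivAt hd hint]
        have hp : γ (2*π) = γ 0 := by have := hγper 0; rwa [zero_add] at this
        rw [hp, sub_self]
      have hrw : ∀ t, ⟪deriv γ t, v⟫ = α t * ⟪e t, v⟫ := by
        intro t; rw [htang t, real_inner_smul_left]
      rcases hsign with hpos | hneg
      · have hgt : 0 < ∫ t in (0:ℝ)..(2*π), ⟪deriv γ t, v⟫ := by
          apply intervalIntegral.intervalIntegral_pos_of_pos_on hint ?_ hT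
          intro x hx
          rw [hrw]
          exact mul_pos (hpos x) (hcon x ⟨hx.1.le, hx.2.le⟩)
        rw [hFTC] at hgt
        exact lt_irrefl _ hgt
      · have hint2 : IntervalIntegrable (fun t => -⟪deriv γ t, v⟫) MeasureTheory.volume 0 (2*π) :=
          ((hdγc.continuous.inner continuous_const).neg).intervalIntegrable 0 (2*π)
        have hgt : 0 < ∫ t in (0:ℝ)..(2*π), -⟪deriv γ t, v⟫ := by
          apply intervalIntegral.intervalIntegral_pos_of_pos_on hint2 ?_ hT
          intro x hx
          rw [hrw]
          have := mul_pos (neg_pos.mpr (hneg x)) (hcon x ⟨hx.1.le, hx.2.le⟩)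
          nlinarith
        rw [intervalIntegral.integral_neg, hFTC, neg_zero] at hgt
        exact lt_irrefl _ hgt
    have hfen := my_fenchel he heunit (by have := heper 0; rwa [zero_add] at this) Hv
    have hπ : 0 < π := Real.pi_pos
    have h2 : 1/π * (2*π) ≤ 1/π * (∫ t in (0:ℝ)..(2*π), ‖deriv e t‖) :=
      mul_le_mul_of_nonneg_left hfen (by positivity)
    have h3 : 1/π * (2*π) = 2 := by field_simp
    have hc0 : (0:ℝ) ≤ (S.ncard : ℝ) := Nat.cast_nonneg _
    linarith
  · -- at least one cusp : show at least two
    have hπ : 0 < π := Real.pi_pos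
    suffices hcard : 2 ≤ S.ncard by
      have h1 : (2:ℝ) ≤ (S.ncard : ℝ) := by exact_mod_cast hcard
      have h2 : 0 ≤ 1/π * (∫ t in (0:ℝ)..(2*π), ‖deriv e t‖) :=
        mul_nonneg (by positivity) hI0
      linarith
    by_contra hlt
    push_neg at hlt
    have h1 : 1 ≤ S.ncard := hSne.ncard_pos hSfin
    have hone : S.ncard = 1 := by omega
    obtain ⟨c, hc⟩ := Set.ncard_eq_one.mp hone
    have hcS : c ∈ S := by rw [hc]; exact mem_singleton_of_eq rfl
    have hαc0 : α c = 0 := (hzero c).mp hcS.2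
    have hzeros : ∀ t, α t = 0 → ∃ k : ℤ, t - c = (k:ℝ) * (2*π) := by
      intro t h0
      obtain ⟨hmS, hmd⟩ := hmod t h0
      rw [hc] at hmS
      have : toIcoMod hT 0 t = c := hmS
      exact ⟨toIcoDiv hT 0 t, by rw [← this]; exact hmd⟩
    have hslopet := hasDerivAt_iff_tendsto_slope.mp (hαd' c)
    rcases lt_or_gt_of_ne (hslope0 c hαc0) with hneg | hpos
    · -- deriv α c < 0 : apply to -α
      have hsl : slope (fun t => -(α t)) c = fun t => -(slope α c t) := by
        funext t
        simp only [slope_def_field]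
        ring
      apply my_no_single_zero hT hαcont.neg (fun x => by simp [hαper x]) (by simp [hαc0])
        (fun t h0 => hzeros t (by simpa using h0))
        (by rw [show (-α) = fun t => -(α t) from rfl, hsl]; exact hslopet.neg) (by linarith)
    · exact my_no_single_zero hT hαcont hαper hαc0 hzeros hslopet hpos
end

section
/- Let r ≥ 1 and let γ : ℝ → ℝ^{r+1} be a smooth 2π-periodic map admitting a 2π-periodic smooth unit tangent vector field e : ℝ → ℝ^{r+1} (i.e. ‖e(t)‖ = 1 and γ'(t) = ⟨γ'(t), e(t)⟩ e(t) for all t). Assume every singular point of γ is non-degenerate (γ''(c) ≠ 0 whenever γ'(c) = 0), and assume the singular set Σ_γ = {t ∈ [0, 2π) : γ'(t) = 0} is nonempty. Then (1/π) ∫₀^{2π} ‖e'(t)‖ dt + #Σ_γ = 2 if and only if #Σ_γ = 2 and there exist distinct points p, q ∈ ℝ^{r+1} such that the image γ(ℝ) equals the closed line segment from p to q. -/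
open Filter Set Topology MeasureTheory
open scoped RealInnerProductSpace

private lemma slope_sign {s : ℝ → ℝ} {c d : ℝ} (hs : HasDerivAt s d c) (hc : s c = 0)
    (hd : d ≠ 0) : ∀ᶠ x in 𝓝[≠] c, 0 < s x * d * (x - c) := by
  have h1 : Tendsto (slope s c) (𝓝[≠] c) (𝓝 d) := hasDerivAt_iff_tendsto_slope.1 hs
  have h2 : Tendsto (fun x => slope s c x * d) (𝓝[≠] c) (𝓝 (d * d)) := h1.mul_const d
  have h3 : ∀ᶠ x in 𝓝[≠] c, 0 < slope s c x * d :=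
    h2.eventually (eventually_gt_nhds (mul_self_pos.2 hd))
  filter_upwards [h3, self_mem_nhdsWithin] with x hx hxc
  have hxc' : x - c ≠ 0 := sub_ne_zero.2 hxc
  have hsl : s x = slope s c x * (x - c) := by
    rw [slope_def_field, hc, sub_zero]; field_simp
  have : s x * d * (x - c) = (slope s c x * d) * (x - c) ^ 2 := by rw [hsl]; ring
  rw [this]
  exact mul_pos hx (by positivity)

/-- Equality case of the Fenchel-type theorem for closed co-orientable frontal curves
with nonempty singular set (Corollary 4.3, equality part). -/
theorem total_absolute_curvature_eq_two_iff_segment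
    (r : ℕ) (hr : 1 ≤ r)
    (γ e : ℝ → EuclideanSpace ℝ (Fin (r + 1)))
    (hγ : ContDiff ℝ (⊤ : ℕ∞) γ) (he : ContDiff ℝ (⊤ : ℕ∞) e)
    (hγper : ∀ t, γ (t + 2 * Real.pi) = γ t)
    (heper : ∀ t, e (t + 2 * Real.pi) = e t)
    (heunit : ∀ t, ‖e t‖ = 1)
    (htang : ∀ t, deriv γ t = ⟪deriv γ t, e t⟫ • e t)
    (hnd : ∀ c, deriv γ c = 0 → deriv (deriv γ) c ≠ 0)
    (hne : ({t ∈ Set.Ico (0 : ℝ) (2 * Real.pi) | deriv γ t = 0}).Nonempty) :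
    (1 / Real.pi) * (∫ t in (0 : ℝ)..(2 * Real.pi), ‖deriv e t‖)
        + (({t ∈ Set.Ico (0 : ℝ) (2 * Real.pi) | deriv γ t = 0}).ncard : ℝ) = 2
      ↔ ({t ∈ Set.Ico (0 : ℝ) (2 * Real.pi) | deriv γ t = 0}).ncard = 2 ∧
        ∃ p q : EuclideanSpace ℝ (Fin (r + 1)), p ≠ q ∧ Set.range γ = segment ℝ p q := by
  have hπ : (0:ℝ) < Real.pi := Real.pi_pos
  set T : ℝ := 2 * Real.pi with hT
  have hTpos : 0 < T := by positivity
  -- basic smoothness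
  have hgi : ContDiff ℝ (⊤ : ℕ∞) γ := hγ.of_le (by simp)
  have hei : ContDiff ℝ (⊤ : ℕ∞) e := he.of_le (by simp)
  have hγ' : ContDiff ℝ (⊤ : ℕ∞) (deriv γ) := (contDiff_infty_iff_deriv.1 hgi).2
  have he' : ContDiff ℝ (⊤ : ℕ∞) (deriv e) := (contDiff_infty_iff_deriv.1 hei).2
  have hγd : Differentiable ℝ γ := hγ.differentiable (by simp)
  have hed : Differentiable ℝ e := he.differentiable (by simp)
  have hγ'd : Differentiable ℝ (deriv γ) := hγ'.differentiable (by simp)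
  set s : ℝ → ℝ := fun t => ⟪deriv γ t, e t⟫ with hs_def
  have hscd : ContDiff ℝ ((⊤:ℕ∞) : WithTop ℕ∞) s := ContDiff.inner ℝ hγ' hei
  have hsd : Differentiable ℝ s := hscd.differentiable (by simp)
  have hscont : Continuous s := hscd.continuous
  -- periodicity of derivatives
  have hγperF : Function.Periodic γ T := hγper
  have heperF : Function.Periodic e T := heper
  have hdγper : ∀ t, deriv γ (t + T) = deriv γ t := by
    intro t
    have : (fun x => γ (x + T)) = γ := funext hγper
    rw [← deriv_comp_add_const γ T t, this]
  have hdeper : ∀ t, deriv e (t + T) = deriv e t := by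
    intro t
    have : (fun x => e (x + T)) = e := funext heper
    rw [← deriv_comp_add_const e T t, this]
  have hsper : ∀ t, s (t + T) = s t := by
    intro t; simp only [hs_def, hdγper t, heper t]
  -- zero set correspondence
  have hzero_iff : ∀ t, deriv γ t = 0 ↔ s t = 0 := by
    intro t
    constructor
    · intro h; simp only [hs_def, h, inner_zero_left]
    · intro h; rw [htang t]; simp only [hs_def] at h; rw [h, zero_smul]
  -- derivative of s is nonzero at zeros
  have hsderiv_ne : ∀ c, s c = 0 → deriv s c ≠ 0 := by
    intro c hc hd0
    have hγc : deriv γ c = 0 := (hzero_iff c).2 hc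
    have hsm : HasDerivAt (fun t => s t • e t) (s c • deriv e c + deriv s c • e c) c :=
      (hsd c).hasDerivAt.smul (hed c).hasDerivAt
    have hfun : (fun t => s t • e t) = deriv γ := by
      funext t; exact (htang t).symm
    rw [hfun] at hsm
    have : deriv (deriv γ) c = s c • deriv e c + deriv s c • e c := hsm.deriv
    rw [hc, hd0, zero_smul, zero_smul, add_zero] at this
    exact hnd c hγc this
  -- isolated zeros
  have hiso : ∀ c, s c = 0 → ∀ᶠ x in 𝓝[≠] c, s x ≠ 0 := by
    intro c hc
    have := slope_sign (hsd c).hasDerivAt hc (hsderiv_ne c hc)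
    filter_upwards [this] with x hx hx0
    rw [hx0] at hx; simp at hx
  -- singular set
  set Sg : Set ℝ := {t ∈ Set.Ico (0 : ℝ) T | deriv γ t = 0} with hSg
  have hSgs : ∀ t, t ∈ Sg ↔ t ∈ Set.Ico (0:ℝ) T ∧ s t = 0 := by
    intro t; simp only [hSg, mem_setOf_eq, mem_sep_iff, hzero_iff]
  have hfin : Sg.Finite := by
    by_contra hinf
    rw [← Set.not_infinite, not_not] at hinf
    obtain ⟨x, -, hx⟩ := hinf.exists_accPt_of_subset_isCompact (isCompact_Icc (a := (0:ℝ)) (b := T))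
      (fun t ht => ⟨ht.1.1, le_of_lt ht.1.2⟩)
    have hl : (𝓝[≠] x ⊓ 𝓟 Sg).NeBot := hx
    have hsx : s x = 0 := by
      have h1 : Tendsto s (𝓝[≠] x ⊓ 𝓟 Sg) (𝓝 (s x)) :=
        (hscont.tendsto x).mono_left (le_trans inf_le_left nhdsWithin_le_nhds)
      have h2 : Tendsto s (𝓝[≠] x ⊓ 𝓟 Sg) (𝓝 0) := by
        apply Tendsto.congr' _ tendsto_const_nhds
        filter_upwards [mem_inf_of_right (mem_principal_self Sg)] with y hy
        exact ((hSgs y).1 hy).2.symm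
      exact tendsto_nhds_unique h1 h2
    have h3 : ∀ᶠ y in 𝓝[≠] x ⊓ 𝓟 Sg, s y ≠ 0 := mem_inf_of_left (hiso x hsx)
    have h4 : ∀ᶠ y in 𝓝[≠] x ⊓ 𝓟 Sg, s y = 0 := by
      filter_upwards [mem_inf_of_right (mem_principal_self Sg)] with y hy
      exact ((hSgs y).1 hy).2
    obtain ⟨y, hy1, hy2⟩ := (h3.and h4).exists
    exact hy1 hy2
  -- no zero of s in (c, c+T) when Sg = {c}
  have hnozero : ∀ c, Sg = {c} → ∀ x ∈ Set.Ioo c (c + T), s x ≠ 0 := by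
    intro c hc x hx hx0
    have hcmem : c ∈ Sg := by rw [hc]; exact rfl
    have hcIco : c ∈ Set.Ico (0:ℝ) T := ((hSgs c).1 hcmem).1
    rcases lt_or_ge x T with h | h
    · have hxm : x ∈ Sg := (hSgs x).2 ⟨⟨le_of_lt (lt_of_le_of_lt hcIco.1 hx.1), h⟩, hx0⟩
      rw [hc, mem_singleton_iff] at hxm
      exact absurd hxm (ne_of_gt hx.1)
    · have hper' : s x = s (x - T) := by
        have := hsper (x - T); rw [sub_add_cancel] at this; exact this
      have hxm : x - T ∈ Sg := (hSgs (x - T)).2 ⟨⟨by linarith, by linarith [hx.2, hcIco.2]⟩, by rw [← hper']; exact hx0⟩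
      rw [hc, mem_singleton_iff] at hxm
      have : x - T < c := by linarith [hx.2]
      rw [hxm] at this; exact lt_irrefl c this
  -- ncard ≠ 1
  have hcase1 : Sg.ncard ≠ 1 := by
    intro h1
    obtain ⟨c, hc⟩ := Set.ncard_eq_one.1 h1
    have hcmem : c ∈ Sg := by rw [hc]; exact rfl
    have hsc : s c = 0 := ((hSgs c).1 hcmem).2
    have hd := hsderiv_ne c hsc
    have hev := slope_sign (hsd c).hasDerivAt hsc hd
    rw [eventually_nhdsWithin_iff] at hev
    obtain ⟨δ, hδpos, hδ⟩ := Metric.eventually_nhds_iff.1 hev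
    set h0 : ℝ := min (δ/2) 1 with hh0
    have hh0pos : 0 < h0 := lt_min (by linarith) one_pos
    have hh0lt : h0 < δ := lt_of_le_of_lt (min_le_left _ _) (by linarith)
    have hh1 : h0 ≤ 1 := min_le_right _ _
    have hπ3 : (3:ℝ) < Real.pi := Real.pi_gt_three
    set d := deriv s c
    have hpa : 0 < s (c + h0) * d := by
      have h1' : dist (c + h0) c < δ := by
        rw [Real.dist_eq]; rw [show c + h0 - c = h0 by ring, abs_of_pos hh0pos]; exact hh0lt
      have h2' := hδ h1' (by simp [ne_of_gt (by linarith : c < c + h0)])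
      have h3' : s (c + h0) * d = (s (c + h0) * d * (c + h0 - c)) / h0 := by
        rw [show c + h0 - c = h0 by ring]; field_simp
      rw [h3']; exact div_pos h2' hh0pos
    have hpb : s (c - h0) * d < 0 := by
      have h1' : dist (c - h0) c < δ := by
        rw [Real.dist_eq]; rw [show c - h0 - c = -h0 by ring, abs_neg, abs_of_pos hh0pos]; exact hh0lt
      have h2' := hδ h1' (by simp [ne_of_lt (by linarith : c - h0 < c)])
      rw [show c - h0 - c = -h0 by ring] at h2'
      nlinarith
    have hsb : s (c - h0 + T) * d < 0 := by rw [hsper (c - h0)]; exact hpb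
    have hab : c + h0 ≤ c - h0 + T := by simp only [hT]; nlinarith
    have hg : ContinuousOn (fun x => s x * d) (Set.Icc (c + h0) (c - h0 + T)) :=
      (hscont.mul continuous_const).continuousOn
    have hmem : (0:ℝ) ∈ Set.Icc (s (c - h0 + T) * d) (s (c + h0) * d) :=
      ⟨le_of_lt hsb, le_of_lt hpa⟩
    obtain ⟨x, hxI, hgx⟩ := intermediate_value_Icc' hab hg hmem
    have hsx : s x = 0 := by
      rcases mul_eq_zero.1 hgx with h | h
      · exact h
      · exact absurd h hd
    exact hnozero c hc x ⟨by linarith [hxI.1], by linarith [hxI.2, hh0pos]⟩ hsx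
  -- if the total curvature integral vanishes, the image is a segment
  have hsegment : Sg.Nonempty → (∫ t in (0:ℝ)..T, ‖deriv e t‖) = 0 →
      ∃ p q : EuclideanSpace ℝ (Fin (r+1)), p ≠ q ∧ Set.range γ = segment ℝ p q := by
    intro hne hI0
    have hcont_ne : Continuous (fun t => ‖deriv e t‖) := he'.continuous.norm
    have hint : IntervalIntegrable (fun t => ‖deriv e t‖) volume 0 T :=
      hcont_ne.intervalIntegrable 0 T
    have hemp : Set.Ioc T 0 = (∅ : Set ℝ) := Set.Ioc_eq_empty (not_lt.2 hTpos.le)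
    have hae := (intervalIntegral.integral_eq_zero_iff_of_nonneg_ae
      (by rw [hemp, Set.union_empty]; exact Filter.Eventually.of_forall fun x => norm_nonneg _)
      hint).1 hI0
    rw [hemp, Set.union_empty] at hae
    have hEq : Set.EqOn (fun t => ‖deriv e t‖) 0 (Set.Ioc 0 T) :=
      MeasureTheory.Measure.eqOn_Ioc_of_ae_eq volume hae hcont_ne.continuousOn continuous_const.continuousOn
    have hde0 : ∀ t, deriv e t = 0 := by
      intro t
      have hper : Function.Periodic (deriv e) T := hdeper
      obtain ⟨y, hy, hty⟩ := hper.exists_mem_Ico₀ hTpos t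
      rcases eq_or_lt_of_le hy.1 with h0 | h0
      · have hT0 : ‖deriv e T‖ = 0 := by
          simpa using hEq (show T ∈ Set.Ioc (0:ℝ) T from ⟨hTpos, le_refl T⟩)
        have h0T : deriv e T = deriv e 0 := by
          have := hdeper 0; rwa [zero_add] at this
        rw [hty, ← h0, ← h0T]; exact norm_eq_zero.1 hT0
      · have : ‖deriv e y‖ = (0:ℝ) := hEq ⟨h0, hy.2.le⟩
        rw [hty]; exact norm_eq_zero.1 this
    have heconst : ∀ t, e t = e 0 := fun t => is_const_of_deriv_eq_zero hed hde0 t 0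
    set e0 : EuclideanSpace ℝ (Fin (r+1)) := e 0 with he0
    have he0norm : ‖e0‖ = 1 := heunit 0
    have he0ne : e0 ≠ 0 := by intro h; rw [h, norm_zero] at he0norm; exact zero_ne_one he0norm
    set sig : ℝ → ℝ := fun t => ⟪γ t - γ 0, e0⟫ with hsig_def
    have hsigd : ∀ t, HasDerivAt sig (s t) t := by
      intro t
      have h1 : HasDerivAt (fun u => γ u - γ 0) (deriv γ t) t :=
        ((hγd t).hasDerivAt).sub_const (γ 0)
      have h2 := HasDerivAt.inner ℝ h1 (hasDerivAt_const t e0)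
      simp only [inner_zero_right, zero_add] at h2
      show HasDerivAt sig (inner ℝ (deriv γ t) (e t)) t
      rw [heconst t]
      exact h2
    have hsigcont : Continuous sig := by
      have : Differentiable ℝ sig := fun t => (hsigd t).differentiableAt
      exact this.continuous
    have hsig0 : sig 0 = 0 := by simp [hsig_def]
    have hγrep : ∀ t, γ t = γ 0 + sig t • e0 := by
      have hF : ∀ u, HasDerivAt (fun u => γ u - sig u • e0) 0 u := by
        intro u
        have h1 := (hγd u).hasDerivAt
        have h2 := (hsigd u).smul_const e0
        have h3 := h1.sub h2
        have h4 : deriv γ u - s u • e0 = 0 := by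
          have hsu : s u = ⟪deriv γ u, e0⟫ := by
            show ⟪deriv γ u, e u⟫ = ⟪deriv γ u, e0⟫
            rw [heconst u]
          rw [htang u, heconst u, ← hsu, sub_self]
        rwa [h4] at h3
      intro t
      have hdiff : Differentiable ℝ (fun u => γ u - sig u • e0) :=
        fun u => (hF u).differentiableAt
      have hder0 : ∀ u, deriv (fun u => γ u - sig u • e0) u = 0 := fun u => (hF u).deriv
      have hc := is_const_of_deriv_eq_zero hdiff hder0 t 0
      rw [hsig0, zero_smul, sub_zero] at hc
      rw [eq_add_of_sub_eq hc]
    have hsigper : Function.Periodic sig T := by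
      intro t; simp only [hsig_def, hγper t]
    have himg := (hsigcont.continuousOn).image_Icc (le_of_lt hTpos)
      (f := sig)
    set m := sInf (sig '' Set.Icc (0:ℝ) T) with hm
    set M := sSup (sig '' Set.Icc (0:ℝ) T) with hM
    have hrange_sig : Set.range sig = Set.Icc m M := by
      apply Set.Subset.antisymm
      · rintro x ⟨t, rfl⟩
        obtain ⟨y, hy, hty⟩ := hsigper.exists_mem_Ico₀ hTpos t
        rw [hty, ← himg]; exact ⟨y, ⟨hy.1, hy.2.le⟩, rfl⟩
      · intro x hx; rw [← himg] at hx; obtain ⟨y, _, rfl⟩ := hx; exact ⟨y, rfl⟩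
    have h0mem : (0:ℝ) ∈ Set.Icc m M := by rw [← hrange_sig]; exact ⟨0, hsig0⟩
    have hmM : m < M := by
      rcases lt_or_ge m M with h | h
      · exact h
      · exfalso
        have hmM' : m = M := le_antisymm (h0mem.1.trans h0mem.2) h
        have hsigconst : ∀ t, sig t = 0 := by
          intro t
          have h1 : sig t ∈ Set.Icc m M := by rw [← hrange_sig]; exact ⟨t, rfl⟩
          have h2 : m = 0 := le_antisymm h0mem.1 (hmM' ▸ h0mem.2)
          have h3 := le_antisymm (hmM' ▸ h1.2) h1.1
          rw [h3, h2]
        have hγconst : γ = fun _ => γ 0 := by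
          funext t; rw [hγrep t, hsigconst t, zero_smul, add_zero]
        obtain ⟨c, hc⟩ := hne
        have hdc : deriv γ c = 0 := by rw [hγconst]; simp
        apply hnd c hdc
        rw [hγconst]
        simp
    refine ⟨γ 0 + m • e0, γ 0 + M • e0, ?_, ?_⟩
    · intro hpq
      have : m • e0 = M • e0 := by
        have := add_left_cancel hpq
        exact this
      have h2 : (m - M) • e0 = 0 := by rw [sub_smul, this, sub_self]
      rcases smul_eq_zero.1 h2 with h | h
      · exact (ne_of_lt hmM) (by linarith [sub_eq_zero.1 h])
      · exact he0ne h
    · have hrγ : Set.range γ = (fun x : ℝ => γ 0 + x • e0) '' Set.Icc m M := by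
        ext z
        constructor
        · rintro ⟨t, rfl⟩
          exact ⟨sig t, by rw [← hrange_sig]; exact ⟨t, rfl⟩, by simpa using (hγrep t).symm⟩
        · rintro ⟨x, hx, rfl⟩
          rw [← hrange_sig] at hx
          obtain ⟨t, rfl⟩ := hx
          exact ⟨t, by simpa using hγrep t⟩
      rw [hrγ]
      have haff : (fun x : ℝ => γ 0 + x • e0) =
          ⇑(AffineMap.lineMap (γ 0) (γ 0 + e0) : ℝ →ᵃ[ℝ] EuclideanSpace ℝ (Fin (r+1))) := by
        funext x
        rw [AffineMap.lineMap_apply_module]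
        module
      have hFm : (AffineMap.lineMap (γ 0) (γ 0 + e0) : ℝ →ᵃ[ℝ] EuclideanSpace ℝ (Fin (r+1))) m
          = γ 0 + m • e0 := by rw [AffineMap.lineMap_apply_module]; module
      have hFM : (AffineMap.lineMap (γ 0) (γ 0 + e0) : ℝ →ᵃ[ℝ] EuclideanSpace ℝ (Fin (r+1))) M
          = γ 0 + M • e0 := by rw [AffineMap.lineMap_apply_module]; module
      rw [haff, ← segment_eq_Icc hmM.le, image_segment, hFm, hFM]
  -- the singular set in the goal is Sg
  have hnei : Sg.Nonempty := hne
  have hInonneg : 0 ≤ ∫ t in (0:ℝ)..T, ‖deriv e t‖ :=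
    intervalIntegral.integral_nonneg (le_of_lt hTpos) (fun x _ => norm_nonneg _)
  constructor
  · -- forward direction
    intro h
    have hn1 : 1 ≤ Sg.ncard := (Set.ncard_pos hfin).2 hnei
    have hn2 : Sg.ncard ≤ 2 := by
      by_contra hgt
      push_neg at hgt
      have h3 : (3:ℝ) ≤ (Sg.ncard : ℝ) := by exact_mod_cast hgt
      have hpos : 0 ≤ (1 / Real.pi) * ∫ t in (0:ℝ)..T, ‖deriv e t‖ := by positivity
      linarith
    have hncard : Sg.ncard = 2 := by
      rcases (by omega : Sg.ncard = 1 ∨ Sg.ncard = 2) with h1 | h1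
      · exact absurd h1 hcase1
      · exact h1
    have hI0 : (∫ t in (0:ℝ)..T, ‖deriv e t‖) = 0 := by
      rw [hncard] at h
      have : (1 / Real.pi) * ∫ t in (0:ℝ)..T, ‖deriv e t‖ = 0 := by push_cast at h; linarith
      rcases mul_eq_zero.1 this with h' | h'
      · exact absurd h' (by positivity)
      · exact h'
    exact ⟨hncard, hsegment hnei hI0⟩
  · -- backward direction
    rintro ⟨hncard, p, q, hpq, hrange⟩
    set u : EuclideanSpace ℝ (Fin (r+1)) := q - p with hu_def
    have hu : u ≠ 0 := sub_ne_zero.2 (Ne.symm hpq)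
    have hun : (0:ℝ) < ‖u‖ := norm_pos_iff.2 hu
    set u0 : EuclideanSpace ℝ (Fin (r+1)) := ‖u‖⁻¹ • u with hu0_def
    have hu0n : ‖u0‖ = 1 := by
      rw [hu0_def, norm_smul, norm_inv, norm_norm, inv_mul_cancel₀ (ne_of_gt hun)]
    -- γ lies on the line p + ℝ u
    have hstepA : ∀ t, ∃ c : ℝ, γ t = p + c • u := by
      intro t
      have : γ t ∈ segment ℝ p q := hrange ▸ Set.mem_range_self t
      rw [segment_eq_image' ℝ p q] at this
      obtain ⟨θ, _, hθ⟩ := this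
      exact ⟨θ, hθ.symm⟩
    set g : ℝ → ℝ := fun t => ⟪γ t - p, u⟫ / (‖u‖^2) with hg_def
    have hγrep2 : ∀ t, γ t = p + g t • u := by
      intro t
      obtain ⟨c, hc⟩ := hstepA t
      have hgc : g t = c := by
        rw [hg_def]
        show ⟪γ t - p, u⟫ / (‖u‖^2) = c
        rw [hc, add_sub_cancel_left, real_inner_smul_left, real_inner_self_eq_norm_sq]
        field_simp
      rw [hgc]; exact hc
    have hgd : ∀ t, HasDerivAt g (⟪deriv γ t, u⟫ / ‖u‖^2) t := by
      intro t
      have h1 : HasDerivAt (fun x => γ x - p) (deriv γ t) t := (hγd t).hasDerivAt.sub_const p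
      have h2 := HasDerivAt.inner ℝ h1 (hasDerivAt_const t u)
      simp only [inner_zero_right, zero_add] at h2
      exact h2.div_const _
    have hdγ2 : ∀ t, deriv γ t = (deriv g t) • u := by
      intro t
      have hfun : γ = fun x => p + g x • u := funext hγrep2
      have h1 : HasDerivAt (fun x => p + g x • u) ((deriv g t) • u) t :=
        (((hgd t).deriv ▸ (hgd t)).smul_const u).const_add p
      rw [hfun]
      exact h1.deriv
    have hstepC : ∀ t, deriv γ t ≠ 0 → e t = u0 ∨ e t = -u0 := by
      intro t ht
      set a : ℝ := deriv g t with ha_def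
      have ha : a ≠ 0 := by
        intro h0
        apply ht
        rw [hdγ2 t, ← ha_def, h0, zero_smul]
      set b : ℝ := ⟪u, e t⟫ with hb_def
      have hkey : a • u = a • (b • e t) := by
        have h1 := htang t
        rw [hdγ2 t, ← ha_def] at h1
        rw [h1, real_inner_smul_left, smul_smul]
      have hueq : u = b • e t := smul_right_injective _ ha hkey
      have habs : ‖u‖ = |b| := by
        rw [hueq, norm_smul, heunit t, mul_one, Real.norm_eq_abs]
      have hb : b ≠ 0 := by
        intro h0; rw [h0, abs_zero] at habs; exact ne_of_gt hun habs
      have het : e t = b⁻¹ • u := by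
        rw [hueq, smul_smul, inv_mul_cancel₀ hb, one_smul]
      rcases (abs_eq (norm_nonneg u)).1 habs.symm with hcase | hcase
      · left
        rw [het, hcase, hu0_def]
      · right
        rw [het, hcase, inv_neg, neg_smul, hu0_def]
    -- e always takes the two values
    have hstepD : ∀ t, e t = u0 ∨ e t = -u0 := by
      intro t
      rcases eq_or_ne (deriv γ t) 0 with h0 | h0
      · have hst : s t = 0 := (hzero_iff t).1 h0
        have hev : ∀ᶠ x in 𝓝[≠] t, e x ∈ ({u0, -u0} : Set (EuclideanSpace ℝ (Fin (r+1)))) := by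
          filter_upwards [hiso t hst] with x hx
          rcases hstepC x (fun hdx => hx ((hzero_iff x).1 hdx)) with h | h
          · exact Or.inl h
          · exact Or.inr h
        have hclosed : IsClosed ({u0, -u0} : Set (EuclideanSpace ℝ (Fin (r+1)))) :=
          (Set.toFinite ({u0, -u0} : Set (EuclideanSpace ℝ (Fin (r+1))))).isClosed
        have htends : Tendsto e (𝓝[≠] t) (𝓝 (e t)) :=
          (he.continuous.tendsto t).mono_left nhdsWithin_le_nhds
        have := hclosed.mem_of_tendsto htends hev
        rcases this with h | h
        · exact Or.inl h
        · exact Or.inr h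
      · exact hstepC t h0
    -- e is constant
    have hg2u : ⟪u0, u0⟫ = (1:ℝ) := by rw [real_inner_self_eq_norm_sq, hu0n]; norm_num
    have hg2 : ∀ t, ⟪e t, u0⟫ = (1:ℝ) ∨ ⟪e t, u0⟫ = -1 := by
      intro t
      rcases hstepD t with h | h
      · left; rw [h, hg2u]
      · right; rw [h, inner_neg_left, hg2u]
    have heconst2 : ∀ t, e t = e 0 := by
      intro t
      by_contra hne'
      have hval : (e t = u0 ∧ e 0 = -u0) ∨ (e t = -u0 ∧ e 0 = u0) := by
        rcases hstepD t with h1 | h1 <;> rcases hstepD 0 with h2 | h2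
        · exact absurd (h1.trans h2.symm) hne'
        · exact Or.inl ⟨h1, h2⟩
        · exact Or.inr ⟨h1, h2⟩
        · exact absurd (h1.trans h2.symm) hne'
      have hg2cont : Continuous fun x => ⟪e x, u0⟫ :=
        Continuous.inner he.continuous continuous_const
      have hzero : ∃ x, ⟪e x, u0⟫ = (0:ℝ) := by
        rcases hval with ⟨h1, h2⟩ | ⟨h1, h2⟩
        · have hmem : (0:ℝ) ∈ Set.Icc (⟪e 0, u0⟫) (⟪e t, u0⟫) := by
            rw [h1, h2]
            simp only [inner_neg_left, hg2u, Set.mem_Icc]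
            norm_num
          obtain ⟨x, hx⟩ := intermediate_value_univ 0 t hg2cont hmem
          exact ⟨x, hx⟩
        · have hmem : (0:ℝ) ∈ Set.Icc (⟪e t, u0⟫) (⟪e 0, u0⟫) := by
            rw [h1, h2]
            simp only [inner_neg_left, hg2u, Set.mem_Icc]
            norm_num
          obtain ⟨x, hx⟩ := intermediate_value_univ t 0 hg2cont hmem
          exact ⟨x, hx⟩
      obtain ⟨x, hx⟩ := hzero
      rcases hg2 x with h | h <;> rw [hx] at h <;> norm_num at h
    have hde00 : ∀ t, deriv e t = 0 := by
      intro t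
      have hfe : e = fun _ => e 0 := funext heconst2
      rw [hfe, deriv_const]
    have hIeq : (∫ t in (0:ℝ)..T, ‖deriv e t‖) = 0 := by
      have hfe : (fun t => ‖deriv e t‖) = fun _ => (0:ℝ) := by
        funext t; rw [hde00 t, norm_zero]
      rw [hfe]
      simp
    rw [hIeq, hncard]
    norm_num
end

section
/- Let r ≥ 1. Let γ : ℝ → ℝ^{r+1} be a smooth map admitting a smooth unit tangent vector field e : ℝ → ℝ^{r+1} (‖e(t)‖ = 1 and γ'(t) = ⟨γ'(t), e(t)⟩ e(t) for all t), and let E₁, …, E_r : ℝ → ℝ^{r+1} be smooth maps such that for every t the family (e(t), E₁(t), …, E_r(t)) is orthonormal. Define the signed volume density λ(t) = det(γ'(t), E₁(t), …, E_r(t)), the determinant of the (r+1)×(r+1) matrix with the listed columns. Then for every singular point c (i.e. γ'(c) = 0) one has λ(c) = 0, and λ'(c) ≠ 0 if and only if γ''(c) ≠ 0. In other words, a singular point of the frontal curve γ is non-degenerate if and only if it is a generalized cusp. -/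
open scoped RealInnerProductSpace

/-- Proposition 4.1: a singular point of a frontal curve is non-degenerate
(the signed volume density function `λ` has nonvanishing derivative there)
if and only if it is a generalized cusp. -/
theorem nondegenerate_iff_generalized_cusp
    (r : ℕ) (hr : 1 ≤ r)
    (γ e : ℝ → EuclideanSpace ℝ (Fin (r + 1)))
    (E : Fin r → ℝ → EuclideanSpace ℝ (Fin (r + 1)))
    (hγ : ContDiff ℝ (⊤ : ℕ∞) γ) (he : ContDiff ℝ (⊤ : ℕ∞) e)
    (hE : ∀ k, ContDiff ℝ (⊤ : ℕ∞) (E k))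
    (heunit : ∀ t, ‖e t‖ = 1)
    (htang : ∀ t, deriv γ t = ⟪deriv γ t, e t⟫ • e t)
    (hON : ∀ t, Orthonormal ℝ
      (fun j : Fin (r + 1) =>
        Fin.cases (motive := fun _ => EuclideanSpace ℝ (Fin (r + 1)))
          (e t) (fun k => E k t) j))
    (lam : ℝ → ℝ)
    (hlam : ∀ t, lam t = Matrix.det (Matrix.of fun i j : Fin (r + 1) =>
      (Fin.cases (motive := fun _ => EuclideanSpace ℝ (Fin (r + 1)))
        (deriv γ t) (fun k => E k t) j) i))
    (c : ℝ) (hc : deriv γ c = 0) :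
    lam c = 0 ∧ (deriv lam c ≠ 0 ↔ deriv (deriv γ) c ≠ 0) := by
  -- notation
  set α : ℝ → ℝ := fun t => ⟪deriv γ t, e t⟫ with hα
  set F : ℝ → Matrix (Fin (r + 1)) (Fin (r + 1)) ℝ :=
    fun t => Matrix.of fun i j : Fin (r + 1) =>
      (Fin.cases (motive := fun _ => EuclideanSpace ℝ (Fin (r + 1)))
        (e t) (fun k => E k t) j) i with hF
  set μ : ℝ → ℝ := fun t => (F t).det with hμ
  -- the key factorization lam = α * μ
  have key : lam = fun t => α t * μ t := by
    funext t
    rw [hlam t]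
    have hM : (Matrix.of fun i j : Fin (r + 1) =>
        (Fin.cases (motive := fun _ => EuclideanSpace ℝ (Fin (r + 1)))
          (deriv γ t) (fun k => E k t) j) i)
        = (F t).updateCol 0 (fun i => α t * e t i) := by
      ext i j
      rw [Matrix.updateCol_apply]
      rcases j with ⟨j, hj⟩
      match j with
      | 0 =>
        simp only [Matrix.of_apply, Fin.cases_zero, if_pos rfl]
        have := htang t
        rw [this]
        rfl
      | Nat.succ m =>
        have hne : (⟨m + 1, hj⟩ : Fin (r + 1)) ≠ 0 := by
          simp [Fin.ext_iff]
        simp only [Matrix.of_apply, if_neg hne, hF]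
        rfl
    rw [hM]
    have : (fun i => α t * e t i) = α t • (fun i => e t i) := by
      funext i; simp
    have hcol : (F t).updateCol 0 (fun i => e t i) = F t := by
      have h2 : (fun i => e t i) = fun i => F t i 0 := by
        funext i; simp [hF]
      rw [h2, Matrix.updateCol_eq_self]
    rw [this, Matrix.det_updateCol_smul, hcol]
  -- smoothness facts
  have hdγ : ContDiff ℝ (⊤ : ℕ∞) (deriv γ) := (contDiff_infty_iff_deriv.mp (hγ.of_le (by simp))).2
  have hαdiff : Differentiable ℝ α :=
    Differentiable.inner ℝ (hdγ.differentiable (by simp)) (he.differentiable (by simp))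
  have hentry : ∀ i j, Differentiable ℝ (fun t => F t i j) := by
    intro i j
    rcases j with ⟨j, hj⟩
    match j with
    | 0 =>
      have h1 : (fun t => F t i ⟨0, hj⟩) = fun t => EuclideanSpace.proj (𝕜 := ℝ) i (e t) := by
        funext t; simp [hF]
      rw [h1]
      exact (EuclideanSpace.proj (𝕜 := ℝ) i).differentiable.comp (he.differentiable (by simp))
    | Nat.succ m =>
      have h1 : (fun t => F t i ⟨m + 1, hj⟩)
          = fun t => EuclideanSpace.proj (𝕜 := ℝ) i (E ⟨m, Nat.lt_of_succ_lt_succ hj⟩ t) := by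
        funext t; simp [hF]
      rw [h1]
      exact (EuclideanSpace.proj (𝕜 := ℝ) i).differentiable.comp ((hE _).differentiable (by simp))
  have hμdiff : Differentiable ℝ μ := by
    have : μ = fun t => ∑ σ : Equiv.Perm (Fin (r + 1)),
        (Equiv.Perm.sign σ : ℝ) * ∏ i, F t (σ i) i := by
      funext t
      simp [hμ, Matrix.det_apply', Int.cast_smul_eq_zsmul]
    rw [this]
    apply Differentiable.fun_sum
    intro σ _
    exact (differentiable_const _).mul
      (Differentiable.fun_finsetProd fun i _ => hentry (σ i) i)
  -- α c = 0
  have hαc : α c = 0 := by simp [hα, hc]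
  -- lam c = 0
  have hlamc : lam c = 0 := by rw [key]; simp [hαc]
  refine ⟨hlamc, ?_⟩
  -- μ c ≠ 0
  have hμc : μ c ≠ 0 := by
    have hFtF : (F c).transpose * F c = 1 := by
      ext j k
      have := orthonormal_iff_ite.mp (hON c) j k
      simp only [PiLp.inner_apply, RCLike.inner_apply, conj_trivial] at this
      simp only [Matrix.mul_apply, Matrix.transpose_apply, Matrix.one_apply]
      rw [← this]
      congr 1
      funext x; exact mul_comm _ _
    have : μ c * μ c = 1 := by
      have h1 : ((F c).transpose * F c).det = 1 := by rw [hFtF, Matrix.det_one]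
      rwa [Matrix.det_mul, Matrix.det_transpose] at h1
    intro h0
    rw [h0, mul_zero] at this
    norm_num at this
  -- deriv lam c = deriv α c * μ c
  have hdlam : deriv lam c = deriv α c * μ c := by
    rw [key]
    have := ((hαdiff c).hasDerivAt.fun_mul (hμdiff c).hasDerivAt).deriv
    rw [this, hαc, zero_mul, add_zero]
  -- deriv (deriv γ) c = deriv α c • e c
  have hddγ : deriv (deriv γ) c = deriv α c • e c := by
    have heq : deriv γ = fun t => α t • e t := funext htang
    rw [heq]
    have hd : HasDerivAt (fun t => α t • e t)
        (α c • deriv e c + deriv α c • e c) c :=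
      (hαdiff c).hasDerivAt.smul (he.differentiable (by simp) c).hasDerivAt
    rw [hd.deriv, hαc, zero_smul, zero_add]
  -- conclude
  have hec : e c ≠ 0 := by
    intro h; have := heunit c; rw [h] at this; simp at this
  rw [hdlam, hddγ]
  constructor
  · intro h h0
    apply h
    rcases smul_eq_zero.mp h0 with h1 | h1
    · rw [h1, zero_mul]
    · exact absurd h1 hec
  · intro h
    intro h0
    rcases mul_eq_zero.mp h0 with h1 | h1
    · exact h (by rw [h1, zero_smul])
    · exact hμc h1
end

section
/- Let n ≥ 1 and r ≥ 1. Let f : ℝⁿ → ℝ^{n+r} be a smooth map and E₁, …, E_r : ℝⁿ → ℝ^{n+r} smooth maps such that for every q ∈ ℝⁿ the family (E₁(q), …, E_r(q)) is orthonormal and every partial derivative ∂f/∂uᵢ(q) (1 ≤ i ≤ n) is orthogonal to every E_j(q) (1 ≤ j ≤ r). Define λ : ℝⁿ → ℝ by λ(q) = det(∂₁f(q), …, ∂ₙf(q), E₁(q), …, E_r(q)), the determinant of the (n+r)×(n+r) matrix with the listed columns. If a point p ∈ ℝⁿ satisfies λ(p) = 0 and dλ_p ≠ 0, then the rank of the differential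 df_p : ℝⁿ → ℝ^{n+r} equals n − 1. -/
open scoped RealInnerProductSpace

noncomputable def detCM (N : ℕ) : ContinuousMultilinearMap ℝ
    (fun _ : Fin N => EuclideanSpace ℝ (Fin N)) ℝ :=
  ∑ σ : Equiv.Perm (Fin N), ((Equiv.Perm.sign σ : ℤ) : ℝ) •
    (ContinuousMultilinearMap.mkPiAlgebra ℝ (Fin N) ℝ).compContinuousLinearMap
      (fun a => EuclideanSpace.proj (σ a))

lemma detCM_eq {N : ℕ} (u : Fin N → EuclideanSpace ℝ (Fin N)) :
    detCM N u = Matrix.det (Matrix.of fun a b : Fin N => u b a) := by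
  rw [Matrix.det_apply']
  simp [detCM, Matrix.det_apply', ContinuousMultilinearMap.sum_apply,
    ContinuousMultilinearMap.smul_apply,
    ContinuousMultilinearMap.compContinuousLinearMap_apply,
    ContinuousMultilinearMap.mkPiAlgebra_apply, smul_eq_mul]

lemma det_cols_eq_zero_iff {N : ℕ} (u : Fin N → EuclideanSpace ℝ (Fin N)) :
    Matrix.det (Matrix.of fun a b : Fin N => u b a) = 0 ↔
      ∃ g : Fin N → ℝ, g ≠ 0 ∧ ∑ b, g b • u b = 0 := by
  rw [← Matrix.exists_mulVec_eq_zero_iff]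
  have key : ∀ g : Fin N → ℝ, ∀ a : Fin N,
      (Matrix.of fun a b : Fin N => u b a).mulVec g a = (∑ b, g b • u b) a := by
    intro g a
    have : (∑ b, g b • u b) a = EuclideanSpace.proj (𝕜 := ℝ) a (∑ b, g b • u b) := rfl
    rw [this, map_sum]
    simp [Matrix.mulVec, dotProduct, mul_comm]
  constructor
  · rintro ⟨g, hg0, hg⟩
    refine ⟨g, hg0, ?_⟩
    ext a
    rw [← key g a, hg]
    simp
  · rintro ⟨g, hg0, hg⟩
    refine ⟨g, hg0, ?_⟩
    funext a
    rw [key g a, hg]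
    simp

lemma det_cols_eq_zero_of_not_li {N : ℕ} (u : Fin N → EuclideanSpace ℝ (Fin N))
    (h : ¬ LinearIndependent ℝ u) :
    Matrix.det (Matrix.of fun a b : Fin N => u b a) = 0 := by
  rw [det_cols_eq_zero_iff]
  obtain ⟨g, hsum, i, hi⟩ := Fintype.not_linearIndependent_iff.mp h
  exact ⟨g, fun h0 => hi (by rw [h0]; rfl), hsum⟩


/-- Lemma 2.2 (local form): at a non-degenerate singular point of a co-orientable
frontal (a zero of the signed volume density function `λ` where `dλ ≠ 0`),
the differential of `f` has rank exactly `n - 1`. -/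
theorem rank_eq_of_nondegenerate_singular_point
    (n r : ℕ) (hn : 1 ≤ n) (hr : 1 ≤ r)
    (f : EuclideanSpace ℝ (Fin n) → EuclideanSpace ℝ (Fin (n + r)))
    (E : Fin r → EuclideanSpace ℝ (Fin n) → EuclideanSpace ℝ (Fin (n + r)))
    (hf : ContDiff ℝ (⊤ : ℕ∞) f) (hE : ∀ k, ContDiff ℝ (⊤ : ℕ∞) (E k))
    (hON : ∀ q, Orthonormal ℝ (fun k : Fin r => E k q))
    (hperp : ∀ q (i : Fin n) (k : Fin r),
      ⟪fderiv ℝ f q (EuclideanSpace.single i 1), E k q⟫ = 0)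
    (lam : EuclideanSpace ℝ (Fin n) → ℝ)
    (hlam : ∀ q, lam q = Matrix.det (Matrix.of fun a b : Fin (n + r) =>
      (Fin.addCases (motive := fun _ => EuclideanSpace ℝ (Fin (n + r)))
        (fun i : Fin n => fderiv ℝ f q (EuclideanSpace.single i 1))
        (fun k : Fin r => E k q) b) a))
    (p : EuclideanSpace ℝ (Fin n))
    (hp : lam p = 0) (hdp : fderiv ℝ lam p ≠ 0) :
    Module.finrank ℝ (LinearMap.range
      ((fderiv ℝ f p) : EuclideanSpace ℝ (Fin n) →ₗ[ℝ] EuclideanSpace ℝ (Fin (n + r))))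
      = n - 1 := by
  classical
  -- columns as functions of the base point
  set col : Fin (n + r) → EuclideanSpace ℝ (Fin n) → EuclideanSpace ℝ (Fin (n + r)) :=
    fun b => Fin.addCases (motive := fun _ => EuclideanSpace ℝ (Fin n) → EuclideanSpace ℝ (Fin (n + r)))
      (fun i => fun q => fderiv ℝ f q (EuclideanSpace.single i 1))
      (fun k => fun q => E k q) b with hcol
  have hcolL : ∀ i : Fin n, col (Fin.castAdd r i) =
      fun q => fderiv ℝ f q (EuclideanSpace.single i 1) := by
    intro i; simp [hcol]
  have hcolR : ∀ k : Fin r, col (Fin.natAdd n k) = fun q => E k q := by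
    intro k; simp [hcol]
  -- lam as a multilinear expression in the columns
  have hlam' : lam = fun q => detCM (n + r) (fun b => col b q) := by
    funext q
    rw [hlam q, detCM_eq]
    congr 1
    ext a b
    refine Fin.addCases (fun i => ?_) (fun k => ?_) b
    · simp [Matrix.of_apply, hcolL]
    · simp [Matrix.of_apply, hcolR]
  set T := ((fderiv ℝ f p) : EuclideanSpace ℝ (Fin n) →ₗ[ℝ] EuclideanSpace ℝ (Fin (n + r)))
    with hT
  -- Step A : lam p = 0 forces rank ≤ n - 1
  have hdet0 : Matrix.det (Matrix.of fun a b : Fin (n + r) => col b p a) = 0 := by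
    rw [← detCM_eq]
    exact ((congrFun hlam' p).symm.trans hp)
  obtain ⟨g, hg0, hgsum⟩ := (det_cols_eq_zero_iff _).mp hdet0
  have hgk : ∀ k : Fin r, g (Fin.natAdd n k) = 0 := by
    intro k
    have h1 : ⟪∑ b, g b • col b p, E k p⟫ = 0 := by rw [hgsum]; simp
    rw [sum_inner] at h1
    simp_rw [real_inner_smul_left] at h1
    rw [Fin.sum_univ_add] at h1
    have hON' := orthonormal_iff_ite.mp (hON p)
    simp only [hcolL, hcolR] at h1
    simpa [hperp, hON', Finset.sum_ite_eq', mul_ite] using h1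
  have hgi : ∃ i : Fin n, g (Fin.castAdd r i) ≠ 0 := by
    by_contra hno
    push_neg at hno
    apply hg0
    funext b
    refine Fin.addCases (fun i => ?_) (fun k => ?_) b
    · exact hno i
    · exact hgk k
  obtain ⟨i₀, hi₀⟩ := hgi
  set x : EuclideanSpace ℝ (Fin n) :=
    ∑ i, g (Fin.castAdd r i) • EuclideanSpace.single i (1 : ℝ) with hx
  have hx0 : x ≠ 0 := by
    intro h
    apply hi₀
    have := congrArg (EuclideanSpace.proj (𝕜 := ℝ) i₀) h
    rw [hx] at this
    simpa [map_sum, EuclideanSpace.single_apply, Finset.sum_ite_eq'] using this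
  have hker : fderiv ℝ f p x = 0 := by
    have h2 : fderiv ℝ f p x =
        ∑ i, g (Fin.castAdd r i) • fderiv ℝ f p (EuclideanSpace.single i (1 : ℝ)) := by
      rw [hx, map_sum]; simp
    rw [h2]
    have h3 := hgsum
    rw [Fin.sum_univ_add] at h3
    simp only [hcolL, hcolR, hgk, zero_smul, Finset.sum_const_zero, add_zero] at h3
    exact h3
  have hmemker : x ∈ LinearMap.ker T := by
    rw [LinearMap.mem_ker, hT]
    simpa using hker
  have hkerpos : 0 < Module.finrank ℝ (LinearMap.ker T) := by
    rw [Module.finrank_pos_iff_exists_ne_zero]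
    exact ⟨⟨x, hmemker⟩, fun hc => hx0 (by simpa using congrArg Subtype.val hc)⟩
  have hrn : Module.finrank ℝ (LinearMap.range T) + Module.finrank ℝ (LinearMap.ker T) = n := by
    rw [LinearMap.finrank_range_add_finrank_ker]
    simp
  have hA : Module.finrank ℝ (LinearMap.range T) ≤ n - 1 := by omega
  by_cases hcase : Module.finrank ℝ (LinearMap.range T) = n - 1
  · exact hcase
  exfalso
  have hn2 : 2 ≤ n := by omega
  have hB : Module.finrank ℝ (LinearMap.range T) ≤ n - 2 := by omega
  -- Step B : then dλ_p = 0, contradiction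
  apply hdp
  have hdiff : ∀ b, DifferentiableAt ℝ (col b) p := by
    intro b
    refine Fin.addCases (fun i => ?_) (fun k => ?_) b
    · rw [hcolL]
      have h1 : ContDiff ℝ (⊤ : ℕ∞) (fun q => fderiv ℝ f q) := hf.fderiv_right (by simp)
      exact ((h1.differentiable (by simp)) p).clm_apply (differentiableAt_const _)
    · rw [hcolR]
      exact ((hE k).differentiable (by simp)) p
  have hDfd : HasFDerivAt (fun q => detCM (n + r) (fun b => col b q))
      (∑ b, ((detCM (n + r)).toContinuousLinearMap (fun j => col j p) b).comp
        (fderiv ℝ (col b) p)) p :=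
    HasFDerivAt.multilinear_comp (detCM (n + r)) (fun b => (hdiff b).hasFDerivAt)
  rw [hlam']
  rw [hDfd.fderiv]
  -- every term of the sum vanishes
  have hzero : ∀ (b : Fin (n + r)) (w : EuclideanSpace ℝ (Fin (n + r))),
      detCM (n + r) (Function.update (fun j => col j p) b w) = 0 := by
    intro b w
    rw [detCM_eq]
    apply det_cols_eq_zero_of_not_li
    intro hli
    have hinj : Function.Injective
        (fun j : {j : Fin n // (Fin.castAdd r j : Fin (n + r)) ≠ b} =>
          (Fin.castAdd r j.1 : Fin (n + r))) :=
      (Fin.castAdd_injective n r).comp Subtype.val_injective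
    have hsub := hli.comp _ hinj
    have heq : (Function.update (fun j => col j p) b w ∘
        fun j : {j : Fin n // (Fin.castAdd r j : Fin (n + r)) ≠ b} =>
          (Fin.castAdd r j.1 : Fin (n + r)))
        = fun j : {j : Fin n // (Fin.castAdd r j : Fin (n + r)) ≠ b} =>
          col (Fin.castAdd r j.1) p := by
      funext j
      exact Function.update_of_ne j.2 _ _
    rw [heq] at hsub
    have hmem : ∀ j : {j : Fin n // (Fin.castAdd r j : Fin (n + r)) ≠ b},
        col (Fin.castAdd r j.1) p ∈ LinearMap.range T := by
      intro j
      refine ⟨EuclideanSpace.single j.1 (1 : ℝ), ?_⟩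
      rw [hT]
      simp [hcolL]
    have hres : LinearIndependent ℝ
        (fun j : {j : Fin n // (Fin.castAdd r j : Fin (n + r)) ≠ b} =>
          (⟨col (Fin.castAdd r j.1) p, hmem j⟩ : LinearMap.range T)) := by
      apply LinearIndependent.of_comp (LinearMap.range T).subtype
      exact hsub
    have hcard := hres.fintype_card_le_finrank
    have hcard1 : Fintype.card {j : Fin n // (Fin.castAdd r j : Fin (n + r)) = b} ≤ 1 := by
      apply Fintype.card_le_one_iff.mpr
      rintro ⟨a, ha⟩ ⟨a', ha'⟩
      exact Subtype.ext (Fin.castAdd_injective n r (ha.trans ha'.symm))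
    have hcard2 : Fintype.card {j : Fin n // (Fin.castAdd r j : Fin (n + r)) ≠ b} =
        n - Fintype.card {j : Fin n // (Fin.castAdd r j : Fin (n + r)) = b} := by
      rw [Fintype.card_subtype_compl]
      simp
    omega
  refine ContinuousLinearMap.ext fun v => ?_
  rw [ContinuousLinearMap.sum_apply]
  refine Finset.sum_eq_zero fun b _ => ?_
  rw [ContinuousLinearMap.comp_apply]
  simpa using hzero b (fderiv ℝ (col b) p v)
end

section
/- Let r ≥ 1 and let γ : ℝ → ℝ^{r+1} be a smooth 2π-periodic map admitting a smooth (not necessarily periodic) unit tangent vector field e : ℝ → ℝ^{r+1} (‖e(t)‖ = 1 and γ'(t) = ⟨γ'(t), e(t)⟩ e(t) for all t). Assume every singular point is non-degenerate, i.e. γ''(c) ≠ 0 whenever γ'(c) = 0. Then γ admits a 2π-periodic smooth unit tangent vector field (i.e. the closed frontal γ is co-orientable) if and only if the number of singular points #{t ∈ [0, 2π) : γ'(t) = 0} in one period is even. -/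
open scoped RealInnerProductSpace

open Filter Topology Set

/-- Near a simple zero, `d * f t * (t - c) > 0`. -/
lemma flip_eventually {f : ℝ → ℝ} {c d : ℝ} (hd : HasDerivAt f d c) (hd0 : d ≠ 0)
    (hc : f c = 0) : ∀ᶠ t in 𝓝[≠] c, 0 < d * f t * (t - c) := by
  have h := hasDerivAt_iff_tendsto_slope.mp hd
  have hU : {x : ℝ | 0 < d * x} ∈ 𝓝 d := by
    refine (isOpen_lt continuous_const (continuous_const.mul continuous_id)).mem_nhds ?_
    simpa using mul_self_pos.mpr hd0
  filter_upwards [h.eventually_mem hU, self_mem_nhdsWithin] with t ht ht'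
  have htc : t - c ≠ 0 := sub_ne_zero.mpr ht'
  have : 0 < d * (f t / (t - c)) := by
    simpa [slope_def_field, slope, hc, div_eq_inv_mul] using ht
  rw [mul_div_assoc'] at this
  rcases div_pos_iff.mp this with ⟨h1, h2⟩ | ⟨h1, h2⟩
  · exact mul_pos h1 h2
  · exact mul_pos_of_neg_of_neg h1 h2

/-- δ-form of the flip lemma. -/
lemma flip_delta {f : ℝ → ℝ} {c d : ℝ} (hd : HasDerivAt f d c) (hd0 : d ≠ 0)
    (hc : f c = 0) : ∃ δ > 0, ∀ t, t ≠ c → |t - c| < δ → 0 < d * f t * (t - c) := by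
  have h := flip_eventually hd hd0 hc
  rw [eventually_nhdsWithin_iff] at h
  rcases Metric.eventually_nhds_iff.mp h with ⟨δ, hδ, hh⟩
  exact ⟨δ, hδ, fun t ht htδ => hh (by simpa [Real.dist_eq] using htδ) ht⟩

/-- Zeros are isolated, so the zero set meets compacts in finite sets. -/
lemma finite_zeros {f : ℝ → ℝ} (hf : Continuous f)
    (hd : ∀ c, f c = 0 → ∃ d, d ≠ 0 ∧ HasDerivAt f d c) (a b : ℝ) :
    ({t | f t = 0} ∩ Set.Icc a b).Finite := by
  have hcl : IsClosed {t | f t = 0} := isClosed_eq hf continuous_const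
  have hcpt : IsCompact ({t | f t = 0} ∩ Set.Icc a b) := isCompact_Icc.inter_left hcl
  refine hcpt.finite ?_
  rw [isDiscrete_iff_nhdsNE]
  intro x hx
  rw [inf_principal_eq_bot]
  obtain ⟨d, hd0, hdx⟩ := hd x hx.1
  filter_upwards [flip_eventually hdx hd0 hx.1] with t ht
  intro hts
  rw [hts.1, mul_zero, zero_mul] at ht
  exact lt_irrefl 0 ht

/-- The regular set is dense. -/
lemma dense_regular {f : ℝ → ℝ}
    (hd : ∀ c, f c = 0 → ∃ d, d ≠ 0 ∧ HasDerivAt f d c) :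
    Dense {t | f t ≠ 0} := by
  intro x
  by_cases hx : f x = 0
  · rw [mem_closure_iff_nhdsWithin_neBot]
    obtain ⟨d, hd0, hdx⟩ := hd x hx
    have h : {t | f t ≠ 0} ∈ 𝓝[≠] x := by
      filter_upwards [flip_eventually hdx hd0 hx] with t ht h0
      rw [h0, mul_zero, zero_mul] at ht; exact lt_irrefl 0 ht
    have h2 : (𝓝[≠] x ⊓ 𝓟 {t | f t ≠ 0}).NeBot := by
      rw [inf_principal_neBot_iff]
      intro U hU
      rcases Filter.nonempty_of_mem ((𝓝[≠] x).inter_mem hU h) with ⟨y, hy1, hy2⟩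
      exact ⟨y, hy1, hy2⟩
    exact h2.mono (le_inf (le_trans inf_le_left nhdsWithin_le_nhds) inf_le_right)
  · exact subset_closure hx

/-- IVT: no zero on `[a,b]` implies same sign at endpoints. -/
lemma sign_const {f : ℝ → ℝ} (hf : Continuous f) {a b : ℝ} (hab : a ≤ b)
    (h : ∀ t ∈ Set.Icc a b, f t ≠ 0) : 0 < f a * f b := by
  have ha := h a ⟨le_refl a, hab⟩
  have hb := h b ⟨hab, le_refl b⟩
  rcases ha.lt_or_gt with ha' | ha' <;> rcases hb.lt_or_gt with hb' | hb'
  · exact mul_pos_of_neg_of_neg ha' hb'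
  · exfalso
    obtain ⟨t, ht, ht0⟩ := intermediate_value_Icc hab hf.continuousOn
      (⟨ha'.le, hb'.le⟩ : (0:ℝ) ∈ Set.Icc (f a) (f b))
    exact h t ht ht0
  · exfalso
    obtain ⟨t, ht, ht0⟩ := intermediate_value_Icc' hab hf.continuousOn
      (⟨hb'.le, ha'.le⟩ : (0:ℝ) ∈ Set.Icc (f b) (f a))
    exact h t ht ht0
  · exact mul_pos ha' hb'

lemma sign_key {x y z : ℝ} (hx : x ≠ 0) (hyz : y * z < 0) :
    (0 < x * z ↔ ¬ 0 < x * y) := by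
  have hy : y ≠ 0 := by rintro rfl; simp at hyz
  have hz : z ≠ 0 := by rintro rfl; simp at hyz
  constructor
  · intro h h2
    nlinarith [mul_pos h h2, mul_self_pos.mpr hx]
  · intro h
    have hxy : x * y < 0 := lt_of_le_of_ne (not_lt.mp h) (mul_ne_zero hx hy)
    nlinarith [mul_pos_of_neg_of_neg hxy hyz, mul_self_pos.mpr hy]

lemma parity_lemma {f : ℝ → ℝ} (hf : Continuous f)
    (hd : ∀ c, f c = 0 → ∃ d, d ≠ 0 ∧ HasDerivAt f d c) :
    ∀ n : ℕ, ∀ a b : ℝ, a < b → f a ≠ 0 → f b ≠ 0 →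
      ({t ∈ Set.Ioo a b | f t = 0}).ncard = n →
      (0 < f a * f b ↔ Even n) := by
  intro n
  induction n using Nat.strong_induction_on with
  | _ n IH =>
  intro a b hab ha hb hcard
  have hfin : ({t ∈ Set.Ioo a b | f t = 0}).Finite := by
    refine (finite_zeros hf hd a b).subset ?_
    rintro t ⟨ht1, ht2⟩
    exact ⟨ht2, ht1.1.le, ht1.2.le⟩
  rcases Nat.eq_zero_or_pos n with hn0 | hnpos
  · subst hn0
    have hempty : {t ∈ Set.Ioo a b | f t = 0} = ∅ := (Set.ncard_eq_zero hfin).mp hcard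
    have : ∀ t ∈ Set.Icc a b, f t ≠ 0 := by
      intro t ht hft
      rcases eq_or_lt_of_le ht.1 with h1 | h1
      · exact ha (h1 ▸ hft)
      rcases eq_or_lt_of_le ht.2 with h2 | h2
      · exact hb (h2 ▸ hft)
      have htZ : t ∈ ({t ∈ Set.Ioo a b | f t = 0} : Set ℝ) := ⟨⟨h1, h2⟩, hft⟩
      rw [hempty] at htZ; exact Set.notMem_empty t htZ
    simpa using sign_const hf hab.le this
  · -- zero set nonempty; take the largest zero c
    set Z := {t ∈ Set.Ioo a b | f t = 0} with hZ
    have hZne : Z.Nonempty := Set.nonempty_of_ncard_ne_zero (by omega)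
    have hFne : hfin.toFinset.Nonempty := by rwa [Set.Finite.toFinset_nonempty]
    set c := hfin.toFinset.max' hFne with hcdef
    have hcZ : c ∈ Z := by
      have := hfin.toFinset.max'_mem hFne
      rwa [Set.Finite.mem_toFinset] at this
    have hmax : ∀ t ∈ Z, t ≤ c := fun t ht =>
      hfin.toFinset.le_max' t ((Set.Finite.mem_toFinset hfin).mpr ht)
    have hcmem := hcZ
    rw [hZ] at hcmem
    obtain ⟨⟨hac, hcb⟩, hfc⟩ := hcmem
    obtain ⟨d, hd0, hdc⟩ := hd c hfc
    obtain ⟨δ, hδ, hflip⟩ := flip_delta hdc hd0 hfc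
    set F := insert a (hfin.toFinset.erase c) with hF
    have hFne' : F.Nonempty := Finset.insert_nonempty _ _
    set m := F.max' hFne' with hm
    have hmc : m < c := by
      have hmem := F.max'_mem hFne'
      rcases Finset.mem_insert.mp hmem with h | h
      · have : m = a := hm.trans h
        rw [this]; exact hac
      · refine lt_of_le_of_ne ?_ (Finset.ne_of_mem_erase h)
        exact hmax m ((Set.Finite.mem_toFinset hfin).mp (Finset.mem_of_mem_erase h))
    have ham : a ≤ m := F.le_max' a (Finset.mem_insert_self _ _)
    set l := max m (c - δ) with hl
    have hlc : l < c := max_lt hmc (by linarith)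
    set p := (l + c)/2 with hp
    have hlp : l < p := by rw [hp]; linarith
    have hpc : p < c := by rw [hp]; linarith
    have hap : a < p := lt_of_le_of_lt (ham.trans (le_max_left m (c - δ))) hlp
    have hpδ : |p - c| < δ := by
      rw [abs_of_neg (by linarith : p - c < 0)]
      have h1 : c - δ ≤ l := le_max_right m (c - δ)
      linarith
    have hdfp : d * f p < 0 := by nlinarith [hflip p (ne_of_lt hpc) hpδ]
    have hfp : f p ≠ 0 := by intro h; rw [h, mul_zero] at hdfp; exact lt_irrefl 0 hdfp
    set u := min b (c + δ) with hu
    have hcu : c < u := lt_min hcb (by linarith)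
    set q := (c + u)/2 with hq
    have hcq : c < q := by rw [hq]; linarith
    have hqu : q < u := by rw [hq]; linarith
    have hqb : q < b := lt_of_lt_of_le hqu (min_le_left _ _)
    have hqδ : |q - c| < δ := by
      rw [abs_of_pos (by linarith : (0:ℝ) < q - c)]
      have h1 : u ≤ c + δ := min_le_right b (c + δ)
      linarith
    have hdfq : 0 < d * f q := by nlinarith [hflip q (ne_of_gt hcq) hqδ]
    have hfq : f q ≠ 0 := fun h => by rw [h, mul_zero] at hdfq; exact lt_irrefl 0 hdfq
    have hqb_sign : 0 < f q * f b := by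
      apply sign_const hf hqb.le
      intro t ht hft
      rcases eq_or_lt_of_le ht.2 with h2 | h2
      · exact hb (h2 ▸ hft)
      have htZ : t ∈ Z := by rw [hZ]; exact ⟨⟨by linarith [ht.1], h2⟩, hft⟩
      have := hmax t htZ
      linarith [ht.1]
    have hset : {t ∈ Set.Ioo a p | f t = 0} = Z \ {c} := by
      ext t
      constructor
      · rintro ⟨⟨h1, h2⟩, h3⟩
        exact ⟨⟨⟨h1, by linarith⟩, h3⟩, by simp; intro h; subst h; linarith⟩
      · rintro ⟨⟨⟨h1, h2⟩, h3⟩, h4⟩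
        have htc : t ≠ c := by simpa using h4
        have htm : t ≤ m := F.le_max' t (Finset.mem_insert_of_mem
          (Finset.mem_erase.mpr ⟨htc, (Set.Finite.mem_toFinset hfin).mpr ⟨⟨h1, h2⟩, h3⟩⟩))
        exact ⟨⟨h1, lt_of_le_of_lt (htm.trans (le_max_left m (c - δ))) hlp⟩, h3⟩
    have hcard' : ({t ∈ Set.Ioo a p | f t = 0}).ncard = n - 1 := by
      rw [hset, Set.ncard_diff_singleton_of_mem hcZ, hcard]
    have hIH := IH (n - 1) (by omega) a p hap ha hfp hcard'
    have hpb : f p * f b < 0 := by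
      rcases mul_neg_iff.mp hdfp with ⟨h1, h2⟩ | ⟨h1, h2⟩ <;>
        rcases mul_pos_iff.mp hdfq with ⟨h3, h4⟩ | ⟨h3, h4⟩ <;>
        rcases mul_pos_iff.mp hqb_sign with ⟨h5, h6⟩ | ⟨h5, h6⟩ <;>
        first
          | linarith
          | exact mul_neg_of_pos_of_neg (by linarith) (by linarith)
          | exact mul_neg_of_neg_of_pos (by linarith) (by linarith)
    rw [sign_key ha hpb, hIH]
    have hsucc : n - 1 + 1 = n := Nat.succ_pred_eq_of_pos hnpos
    conv_rhs => rw [← hsucc]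
    rw [Nat.even_add_one]

lemma zsmul_invariance {Z : Set ℝ} {T : ℝ} (hZ : ∀ t, t ∈ Z ↔ t + T ∈ Z) :
    ∀ (n : ℤ) (t : ℝ), t + n • T ∈ Z ↔ t ∈ Z := by
  intro n
  induction n using Int.induction_on with
  | zero => intro t; simp
  | succ k ih =>
    intro t
    have h : t + ((k : ℤ) + 1) • T = (t + (k : ℤ) • T) + T := by
      simp only [zsmul_eq_mul]; push_cast; ring
    rw [h, ← hZ, ih]
  | pred k ih =>
    intro t
    have h : t + (-(k : ℤ) - 1) • T + T = t + (-(k : ℤ)) • T := by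
      simp only [zsmul_eq_mul]; push_cast; ring
    rw [← ih t, ← h, ← hZ]

lemma ncard_periodic_window {Z : Set ℝ} {T : ℝ} (hT : 0 < T)
    (hZ : ∀ t, t ∈ Z ↔ t + T ∈ Z) (a : ℝ) :
    (Z ∩ Set.Ico a (a + T)).ncard = (Z ∩ Set.Ico 0 T).ncard := by
  have hinv := zsmul_invariance hZ
  have himg : Z ∩ Set.Ico a (a + T) = (toIcoMod hT a) '' (Z ∩ Set.Ico 0 T) := by
    ext y
    constructor
    · rintro ⟨hyZ, hy⟩
      refine ⟨toIcoMod hT 0 y, ⟨?_, by simpa using toIcoMod_mem_Ico hT 0 y⟩, ?_⟩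
      · have h1 : toIcoMod hT 0 y = y + (-(toIcoDiv hT 0 y)) • T := by
          rw [neg_zsmul, ← sub_eq_add_neg]
          exact eq_sub_of_add_eq (toIcoMod_add_toIcoDiv_zsmul hT 0 y)
        rw [h1]; exact (hinv _ y).mpr hyZ
      · have h2 : toIcoMod hT a (toIcoMod hT 0 y) = toIcoMod hT a y :=
          (toIcoMod_eq_toIcoMod hT).mpr ⟨toIcoDiv hT 0 y, by
            have h := eq_sub_of_add_eq (toIcoMod_add_toIcoDiv_zsmul hT 0 y)
            rw [h]; abel⟩
        rw [h2]; exact (toIcoMod_eq_self hT).mpr hy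
    · rintro ⟨x, ⟨hxZ, hx⟩, rfl⟩
      constructor
      · have h3 : toIcoMod hT a x = x + (-(toIcoDiv hT a x)) • T := by
          rw [neg_zsmul, ← sub_eq_add_neg]
          exact eq_sub_of_add_eq (toIcoMod_add_toIcoDiv_zsmul hT a x)
        rw [h3]; exact (hinv _ x).mpr hxZ
      · exact toIcoMod_mem_Ico hT a x
  rw [himg]
  apply Set.ncard_image_of_injOn
  rintro x ⟨hxZ, hx1, hx2⟩ x' ⟨hx'Z, hx'1, hx'2⟩ hxx
  obtain ⟨k, hk⟩ := (toIcoMod_eq_toIcoMod hT).mp hxx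
  have habs : |x' - x| < T := by
    rw [abs_sub_lt_iff]; constructor <;> linarith
  rw [hk] at habs
  have h4 : |(k : ℝ)| * T < T := by
    rwa [← abs_of_pos hT, ← abs_mul, abs_of_pos hT, ← zsmul_eq_mul]
  have hk1 : |(k : ℝ)| < 1 := by
    by_contra hcon
    push_neg at hcon
    nlinarith
  have hk0 : k = 0 := by
    have h5 : ((|k| : ℤ) : ℝ) < 1 := by rwa [Int.cast_abs]
    have h6 : |k| < 1 := by exact_mod_cast h5
    exact Int.abs_lt_one_iff.mp h6
  rw [hk0] at hk
  simp only [zero_zsmul, sub_eq_zero] at hk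
  exact hk.symm

lemma parity_window {f : ℝ → ℝ} {T ε : ℝ} (hT : 0 < T) (hf : Continuous f)
    (hd : ∀ c, f c = 0 → ∃ d, d ≠ 0 ∧ HasDerivAt f d c)
    (hεpm : ε = 1 ∨ ε = -1) (hper : ∀ t, f (t + T) = ε * f t) :
    (ε = 1 ↔ Even ({t ∈ Set.Ico 0 T | f t = 0}).ncard) := by
  have hε0 : ε ≠ 0 := by rcases hεpm with h | h <;> rw [h] <;> norm_num
  have hfin0 : ({t | f t = 0} ∩ Set.Icc 0 T).Finite := finite_zeros hf hd 0 T
  have hinf : (Set.Ico (0:ℝ) T).Infinite := Set.Ico_infinite hT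
  obtain ⟨a, haI, haN⟩ := (hinf.diff hfin0).nonempty
  have hfa : f a ≠ 0 := fun h => haN ⟨h, haI.1, haI.2.le⟩
  have hfaT : f (a + T) ≠ 0 := by rw [hper]; exact mul_ne_zero hε0 hfa
  have hZper : ∀ t, t ∈ {t | f t = 0} ↔ t + T ∈ {t | f t = 0} := by
    intro t; simp [Set.mem_setOf_eq, hper t, hε0]
  have hwin := ncard_periodic_window hT hZper a
  have e1 : {t ∈ Set.Ico 0 T | f t = 0} = {t | f t = 0} ∩ Set.Ico 0 T := by
    ext t; exact ⟨fun h => ⟨h.2, h.1⟩, fun h => ⟨h.2, h.1⟩⟩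
  have e2 : {t | f t = 0} ∩ Set.Ico a (a + T) = {t ∈ Set.Ioo a (a + T) | f t = 0} := by
    ext t
    simp only [Set.mem_inter_iff, Set.mem_setOf_eq, Set.mem_Ico, Set.mem_Ioo]
    constructor
    · rintro ⟨h1, h2, h3⟩
      refine ⟨⟨lt_of_le_of_ne h2 ?_, h3⟩, h1⟩
      intro h; exact hfa (h ▸ h1)
    · rintro ⟨⟨h1, h2⟩, h3⟩; exact ⟨h3, h1.le, h2⟩
  have hab : a < a + T := by linarith
  have hpar := parity_lemma hf hd ({t ∈ Set.Ioo a (a + T) | f t = 0}).ncard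
    a (a + T) hab hfa hfaT rfl
  rw [hper a] at hpar
  have hcount : ({t ∈ Set.Ico 0 T | f t = 0}).ncard
      = ({t ∈ Set.Ioo a (a + T) | f t = 0}).ncard := by
    rw [e1, ← hwin, e2]
  rw [hcount, ← hpar]
  rcases hεpm with h | h <;> subst h
  · exact iff_of_true rfl (by nlinarith [mul_self_pos.mpr hfa])
  · exact iff_of_false (by norm_num) (by nlinarith [mul_self_pos.mpr hfa])

lemma pm_of_sq_eq_one {x : ℝ} (h : x ^ 2 = 1) : x = 1 ∨ x = -1 := by
  have h' : (x - 1) * (x + 1) = 0 := by nlinarith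
  rcases mul_eq_zero.mp h' with h'' | h''
  · left; linarith
  · right; linarith

lemma const_pm {g : ℝ → ℝ} (hg : Continuous g) (hsq : ∀ t, g t ^ 2 = 1) :
    ∀ t, g t = g 0 := by
  intro t
  by_contra hne
  have h0 : (0:ℝ) ∈ Set.uIcc (g 0) (g t) := by
    rcases pm_of_sq_eq_one (hsq 0) with ha | ha <;> rcases pm_of_sq_eq_one (hsq t) with hb | hb <;>
      first
      | (exact absurd (hb.trans ha.symm) hne)
      | (rw [ha, hb, Set.mem_uIcc]; norm_num)
  obtain ⟨s, _, hs⟩ := intermediate_value_uIcc hg.continuousOn h0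
  have := hsq s
  rw [hs] at this
  norm_num at this

lemma smul_eq_smul_unit {E : Type*} [NormedAddCommGroup E] [NormedSpace ℝ E]
    {A B : ℝ} {x y : E} (h : A • x = B • y) (hx : ‖x‖ = 1) (hy : ‖y‖ = 1)
    (hB : B ≠ 0) : A ≠ 0 ∧ x = (B / A) • y ∧ |A| = |B| := by
  have habs : |A| = |B| := by
    have h2 := congrArg norm h
    rwa [norm_smul, norm_smul, hx, hy, mul_one, mul_one, Real.norm_eq_abs,
      Real.norm_eq_abs] at h2
  have hA : A ≠ 0 := by
    intro h0; rw [h0, abs_zero] at habs; exact hB (abs_eq_zero.mp habs.symm)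
  refine ⟨hA, ?_, habs⟩
  have h3 := congrArg (fun v => A⁻¹ • v) h
  rw [inv_smul_smul₀ hA] at h3
  rw [h3, smul_smul, div_eq_inv_mul]

/-- End of Section 4.1: a closed frontal curve with non-degenerate singular points is
co-orientable (admits a `2π`-periodic unit tangent vector field) if and only if the
number of singular points in one period is even. -/
theorem coorientable_iff_even_singular_points
    (r : ℕ) (hr : 1 ≤ r)
    (γ e : ℝ → EuclideanSpace ℝ (Fin (r + 1)))
    (hγ : ContDiff ℝ (⊤ : ℕ∞) γ) (he : ContDiff ℝ (⊤ : ℕ∞) e)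
    (hγper : ∀ t, γ (t + 2 * Real.pi) = γ t)
    (heunit : ∀ t, ‖e t‖ = 1)
    (htang : ∀ t, deriv γ t = ⟪deriv γ t, e t⟫ • e t)
    (hnd : ∀ c, deriv γ c = 0 → deriv (deriv γ) c ≠ 0) :
    (∃ e' : ℝ → EuclideanSpace ℝ (Fin (r + 1)),
        ContDiff ℝ (⊤ : ℕ∞) e' ∧ (∀ t, ‖e' t‖ = 1) ∧
        (∀ t, deriv γ t = ⟪deriv γ t, e' t⟫ • e' t) ∧
        (∀ t, e' (t + 2 * Real.pi) = e' t))
      ↔ Even ({t ∈ Set.Ico (0 : ℝ) (2 * Real.pi) | deriv γ t = 0}).ncard := by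
  have hT : (0:ℝ) < 2 * Real.pi := by linarith [Real.pi_pos]
  set T := 2 * Real.pi with hTdef
  set f : ℝ → ℝ := fun t => ⟪deriv γ t, e t⟫ with hfdef
  have hfeq : ∀ t, f t = ⟪deriv γ t, e t⟫ := fun _ => rfl
  -- smoothness facts
  have hγ2 : ContDiff ℝ (1 + 1) γ := hγ.of_le (by exact WithTop.coe_le_coe.mpr le_top)
  have hdγ : ContDiff ℝ 1 (deriv γ) := (contDiff_succ_iff_deriv.mp hγ2).2.2
  have he1 : ContDiff ℝ 1 e := he.of_le (by simp)
  have hfC : ContDiff ℝ 1 f := hdγ.inner ℝ he1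
  have hfcont : Continuous f := hfC.continuous
  have hfdiff : Differentiable ℝ f := hfC.differentiable one_ne_zero
  have hsmul : ∀ t, deriv γ t = f t • e t := htang
  -- singular points of γ = zeros of f
  have hzero : ∀ t, deriv γ t = 0 ↔ f t = 0 := by
    intro t
    constructor
    · intro h; rw [hfeq, h]; exact inner_zero_left _
    · intro h; rw [hsmul t, h, zero_smul]
  -- nondegeneracy transfers to f
  have hd : ∀ c, f c = 0 → ∃ d, d ≠ 0 ∧ HasDerivAt f d c := by
    intro c hc
    refine ⟨deriv f c, ?_, (hfdiff c).hasDerivAt⟩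
    intro h0
    apply hnd c ((hzero c).mpr hc)
    have hDs : HasDerivAt (fun t => f t • e t)
        (f c • deriv e c + deriv f c • e c) c :=
      ((hfdiff c).hasDerivAt).smul ((he1.differentiable one_ne_zero c).hasDerivAt)
    have hder : deriv (deriv γ) c = f c • deriv e c + deriv f c • e c := by
      have : deriv γ = fun t => f t • e t := funext hsmul
      rw [this]; exact hDs.deriv
    rw [hder, hc, h0]; simp
  -- periodicity of deriv γ
  have hperγ' : ∀ t, deriv γ (t + T) = deriv γ t := by
    intro t
    have hfun : (fun x => γ (x + T)) = γ := funext hγper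
    calc deriv γ (t + T) = deriv (fun x => γ (x + T)) t := (deriv_comp_add_const γ T t).symm
      _ = deriv γ t := by rw [hfun]
  have hdense : Dense {t | f t ≠ 0} := dense_regular hd
  -- the comparison function σ
  set σ : ℝ → ℝ := fun t => ⟪e (t + T), e t⟫ with hσdef
  have hσeq : ∀ t, σ t = ⟪e (t + T), e t⟫ := fun _ => rfl
  have hσcont : Continuous σ :=
    Continuous.inner (he.continuous.comp (continuous_id.add continuous_const)) he.continuous
  have hreg : ∀ t, f t ≠ 0 → f (t + T) ≠ 0 ∧
      e (t + T) = (f t / f (t + T)) • e t ∧ |f (t + T)| = |f t| := by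
    intro t hft
    have h1 : f (t + T) • e (t + T) = f t • e t := by
      calc f (t + T) • e (t + T) = deriv γ (t + T) := (hsmul (t + T)).symm
        _ = deriv γ t := hperγ' t
        _ = f t • e t := hsmul t
    exact smul_eq_smul_unit h1 (heunit _) (heunit _) hft
  have hσpm : ∀ t, f t ≠ 0 → σ t = f t / f (t + T) := by
    intro t hft
    obtain ⟨h3, h4, h5⟩ := hreg t hft
    rw [hσeq, h4, real_inner_smul_left, real_inner_self_eq_norm_sq, heunit]
    norm_num
  have hσsq : ∀ t, σ t ^ 2 = 1 := by
    have heqon : Set.EqOn (fun t => σ t ^ 2) (fun _ => (1:ℝ)) {t | f t ≠ 0} := by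
      intro t ht
      obtain ⟨h3, h4, h5⟩ := hreg t ht
      have hsq : f t ^ 2 = f (t + T) ^ 2 := by
        rw [← sq_abs, ← sq_abs (f (t + T)), h5]
      simp only
      rw [hσpm t ht]
      field_simp
      linarith [hsq]
    have := Continuous.ext_on hdense (hσcont.pow 2) continuous_const heqon
    exact fun t => congrFun this t
  have hσconst : ∀ t, σ t = σ 0 := const_pm hσcont hσsq
  have hεpm : σ 0 = 1 ∨ σ 0 = -1 := pm_of_sq_eq_one (hσsq 0)
  have heT : ∀ t, e (t + T) = σ 0 • e t := by
    have heqon : Set.EqOn (fun t => e (t + T)) (fun t => σ 0 • e t) {t | f t ≠ 0} := by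
      intro t ht
      obtain ⟨h3, h4, h5⟩ := hreg t ht
      simp only
      rw [h4]
      congr 1
      rw [← hσpm t ht, hσconst t]
    have hc1 : Continuous fun t => e (t + T) :=
      he.continuous.comp (continuous_id.add continuous_const)
    have hc2 : Continuous fun t => σ 0 • e t := he.continuous.const_smul (σ 0)
    exact fun t => congrFun (Continuous.ext_on hdense hc1 hc2 heqon) t
  have hfT : ∀ t, f (t + T) = σ 0 * f t := by
    intro t
    rw [hfeq, hfeq, hperγ' t, heT t, real_inner_smul_right]
  have hsetgoal : {t ∈ Set.Ico (0:ℝ) T | deriv γ t = 0} = {t ∈ Set.Ico (0:ℝ) T | f t = 0} := by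
    ext t
    exact ⟨fun h => ⟨h.1, (hzero t).mp h.2⟩, fun h => ⟨h.1, (hzero t).mpr h.2⟩⟩
  rw [hsetgoal, ← parity_window hT hfcont hd hεpm hfT]
  constructor
  · rintro ⟨e', he'C, he'unit, h'tang, h'per⟩
    -- compare e' with e
    set g : ℝ → ℝ := fun t => ⟪e' t, e t⟫ with hgdef
    have hgeq : ∀ t, g t = ⟪e' t, e t⟫ := fun _ => rfl
    have hgcont : Continuous g := Continuous.inner he'C.continuous he.continuous
    have hreg' : ∀ t, f t ≠ 0 → ⟪deriv γ t, e' t⟫ ≠ 0 ∧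
        e' t = (f t / ⟪deriv γ t, e' t⟫) • e t ∧ |⟪deriv γ t, e' t⟫| = |f t| := by
      intro t hft
      have h1 : ⟪deriv γ t, e' t⟫ • e' t = f t • e t := by
        rw [← h'tang t]; exact hsmul t
      exact smul_eq_smul_unit h1 (he'unit _) (heunit _) hft
    have hgpm : ∀ t, f t ≠ 0 → g t = f t / ⟪deriv γ t, e' t⟫ := by
      intro t hft
      obtain ⟨h3, h4, h5⟩ := hreg' t hft
      rw [hgeq]
      conv_lhs => rw [h4]
      rw [real_inner_smul_left, real_inner_self_eq_norm_sq, heunit]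
      norm_num
    have hgsq : ∀ t, g t ^ 2 = 1 := by
      have heqon : Set.EqOn (fun t => g t ^ 2) (fun _ => (1:ℝ)) {t | f t ≠ 0} := by
        intro t ht
        obtain ⟨h3, h4, h5⟩ := hreg' t ht
        have hsq : f t ^ 2 = ⟪deriv γ t, e' t⟫ ^ 2 := by
          rw [← sq_abs, ← sq_abs (⟪deriv γ t, e' t⟫ : ℝ), h5]
        simp only
        rw [hgpm t ht, div_pow, hsq, div_self (pow_ne_zero 2 h3)]
      have := Continuous.ext_on hdense (hgcont.pow 2) continuous_const heqon
      exact fun t => congrFun this t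
    have hgconst : ∀ t, g t = g 0 := const_pm hgcont hgsq
    have hg0 : g 0 ≠ 0 := by
      rcases pm_of_sq_eq_one (hgsq 0) with h | h <;> rw [h] <;> norm_num
    have he'e : ∀ t, e' t = g 0 • e t := by
      have heqon : Set.EqOn e' (fun t => g 0 • e t) {t | f t ≠ 0} := by
        intro t ht
        obtain ⟨h3, h4, h5⟩ := hreg' t ht
        simp only
        rw [h4]
        congr 1
        rw [← hgpm t ht, hgconst t]
      have hc2 : Continuous fun t => g 0 • e t := he.continuous.const_smul (g 0)
      exact fun t => congrFun (Continuous.ext_on hdense he'C.continuous hc2 heqon) t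
    have heper : e (0 + T) = e 0 := by
      have h := h'per 0
      rw [he'e (0 + T), he'e 0] at h
      exact smul_right_injective _ hg0 h
    rw [hσeq 0, heper, real_inner_self_eq_norm_sq, heunit]
    norm_num
  · intro hε1
    refine ⟨e, he, heunit, htang, fun t => ?_⟩
    rw [heT t, hε1, one_smul]
end

section
/- Let r ≥ 1 and let γ : ℝ → ℝ^{r+1} be a smooth 2π-periodic map admitting a smooth unit tangent vector field e : ℝ → ℝ^{r+1} (‖e(t)‖ = 1 and γ'(t) = ⟨γ'(t), e(t)⟩ e(t) for all t), and assume the regular set {t : γ'(t) ≠ 0} is dense in ℝ. Then either e(t + 2π) = e(t) for all t ∈ ℝ, or e(t + 2π) = −e(t) for all t ∈ ℝ. -/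
open scoped RealInnerProductSpace

/-- Monodromy dichotomy (Section 4.1): the unit tangent vector field of a closed
(`2π`-periodic) frontal curve with dense regular set satisfies `e(t + 2π) = e(t)`
for all `t`, or `e(t + 2π) = −e(t)` for all `t`. -/
theorem unit_tangent_monodromy_dichotomy
    (r : ℕ) (hr : 1 ≤ r)
    (γ e : ℝ → EuclideanSpace ℝ (Fin (r + 1)))
    (hγ : ContDiff ℝ (⊤ : ℕ∞) γ) (he : ContDiff ℝ (⊤ : ℕ∞) e)
    (hγper : ∀ t, γ (t + 2 * Real.pi) = γ t)
    (heunit : ∀ t, ‖e t‖ = 1)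
    (htang : ∀ t, deriv γ t = ⟪deriv γ t, e t⟫ • e t)
    (hdense : Dense {t : ℝ | deriv γ t ≠ 0}) :
    (∀ t, e (t + 2 * Real.pi) = e t) ∨ (∀ t, e (t + 2 * Real.pi) = -e t) := by
  set f : ℝ → ℝ := fun t => ⟪e (t + 2 * Real.pi), e t⟫ with hf
  have hfc : Continuous f := by
    exact Continuous.inner (he.continuous.comp (continuous_id.add continuous_const)) he.continuous
  -- periodicity of the derivative
  have hderper : ∀ t, deriv γ (t + 2 * Real.pi) = deriv γ t := by
    intro t
    have h1 : deriv (fun x => γ (x + 2 * Real.pi)) t = deriv γ (t + 2 * Real.pi) :=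
      deriv_comp_add_const γ _ t
    have h2 : (fun x => γ (x + 2 * Real.pi)) = γ := funext hγper
    rw [h2] at h1
    exact h1.symm
  -- on regular points, f t ^ 2 = 1
  have hreg : ∀ t, deriv γ t ≠ 0 → f t ^ 2 = 1 := by
    intro t ht
    set c : ℝ := ⟪deriv γ t, e t⟫ with hc
    set c' : ℝ := ⟪deriv γ t, e (t + 2 * Real.pi)⟫ with hc'
    have h1 : deriv γ t = c • e t := htang t
    have h2 : deriv γ t = c' • e (t + 2 * Real.pi) := by
      have := htang (t + 2 * Real.pi)
      rwa [hderper t] at this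
    have hcne : c ≠ 0 := by
      intro h
      rw [h, zero_smul] at h1
      exact ht h1
    have hA : c = c' * f t := by
      have : ⟪deriv γ t, e t⟫ = ⟪c' • e (t + 2 * Real.pi), e t⟫ := by rw [← h2]
      rw [real_inner_smul_left] at this
      simpa [hc, hf] using this
    have hB : c' = c * f t := by
      have : ⟪c • e t, e (t + 2 * Real.pi)⟫ = ⟪c' • e (t + 2 * Real.pi), e (t + 2 * Real.pi)⟫ := by
        rw [← h1, ← h2]
      rw [real_inner_smul_left, real_inner_smul_left, real_inner_self_eq_norm_sq,
        heunit (t + 2 * Real.pi)] at this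
      rw [real_inner_comm] at this
      simpa [hc', hf] using this.symm
    have : c = c * f t * f t := by rw [← hB]; exact hA
    have h3 : c * (f t ^ 2 - 1) = 0 := by ring_nf; nlinarith [this]
    rcases mul_eq_zero.1 h3 with h | h
    · exact absurd h hcne
    · linarith
  -- f t ^ 2 = 1 everywhere, by density and continuity
  have hsq : ∀ t, f t ^ 2 = 1 := by
    have hclosed : IsClosed {t : ℝ | f t ^ 2 = 1} := by
      have : Continuous fun t => f t ^ 2 := hfc.pow 2
      exact isClosed_eq this continuous_const
    intro t
    have hsub : {t : ℝ | deriv γ t ≠ 0} ⊆ {t : ℝ | f t ^ 2 = 1} := fun s hs => hreg s hs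
    have : closure {t : ℝ | deriv γ t ≠ 0} ⊆ {t : ℝ | f t ^ 2 = 1} :=
      closure_minimal hsub hclosed
    exact this (by rw [hdense.closure_eq]; trivial)
  have hval : ∀ t, f t = 1 ∨ f t = -1 := by
    intro t
    have := hsq t
    have h : (f t - 1) * (f t + 1) = 0 := by nlinarith [hsq t]
    rcases mul_eq_zero.1 h with h | h
    · left; linarith
    · right; linarith
  -- f is constant by connectedness (IVT)
  have hconst : (∀ t, f t = 1) ∨ (∀ t, f t = -1) := by
    by_cases h1 : ∀ t, f t = 1
    · exact Or.inl h1
    · push_neg at h1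
      obtain ⟨b, hb⟩ := h1
      have hfb : f b = -1 := (hval b).resolve_left hb
      right
      intro t
      by_contra ht
      have hft : f t = 1 := (hval t).resolve_right ht
      have : (0 : ℝ) ∈ Set.Icc (f b) (f t) := by
        rw [hfb, hft]; constructor <;> norm_num
      obtain ⟨s, hs⟩ := intermediate_value_univ b t hfc this
      have := hsq s
      rw [hs] at this
      norm_num at this
  rcases hconst with h | h
  · left
    intro t
    exact (inner_eq_one_iff_of_norm_eq_one (heunit (t + 2 * Real.pi)) (heunit t)).1 (h t)
  · right
    intro t
    have : ⟪e (t + 2 * Real.pi), -e t⟫ = 1 := by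
      rw [inner_neg_right]
      simp only [hf] at h
      rw [h t]; ring
    have := (inner_eq_one_iff_of_norm_eq_one (heunit (t + 2 * Real.pi)) (by rw [norm_neg]; exact heunit t)).1 this
    rw [this]
end
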